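/- arXiv:2209.01011 — 6 statements merged into one kernel-verified Lean document; each statement's English description precedes it below -/
import Mathlib

section
/- Let Z be a compact convex subset of R^m, X' a set of first-stage decisions, and for each x in X' let X(x) be a finite nonempty subset of R^n. Let f(x,y,ζ) be linear (affine) in y and concave and continuous in ζ. Then min over x in X' of max over ζ in Z of min over y in X(x) of f(x,y,ζ) equals min over x in X' of min over (n+1)-tuples (y^(1),...,y^(n+1)) of elements of X(x) of max over ζ in Z of min over i in {1,...,n+1} of f(x,y^(i),ζ). -/
lemma exists_mixed_weights {k : Type*} [Fintype k] [Nonempty k] {m : ℕ}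
    (Z : Set (Fin m → ℝ)) (hZne : Z.Nonempty) (hZconv : Convex ℝ Z)
    (g : k → (Fin m → ℝ) → ℝ)
    (hconc : ∀ y, ConcaveOn ℝ Z (g y)) (v : ℝ)
    (hv : ∀ ζ ∈ Z, ∃ y, g y ζ ≤ v) :
    ∃ μ : k → ℝ, (∀ y, 0 ≤ μ y) ∧ (∑ y, μ y = 1) ∧
      ∀ ζ ∈ Z, ∑ y, μ y * g y ζ ≤ v := by
  classical
  set O : Set (k → ℝ) := Set.univ.pi fun _ => Set.Ioi v with hO
  set C : Set (k → ℝ) := {u | ∃ ζ ∈ Z, ∀ y, u y ≤ g y ζ} with hCdef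
  have hOopen : IsOpen O := isOpen_set_pi Set.finite_univ fun _ _ => isOpen_Ioi
  have hOconv : Convex ℝ O := convex_pi fun _ _ => convex_Ioi v
  have hCconv : Convex ℝ C := by
    rintro u₁ ⟨ζ₁, hζ₁, h₁⟩ u₂ ⟨ζ₂, hζ₂, h₂⟩ a b ha hb hab
    refine ⟨a • ζ₁ + b • ζ₂, hZconv hζ₁ hζ₂ ha hb hab, fun y => ?_⟩
    have hcc := (hconc y).2 hζ₁ hζ₂ ha hb hab
    simp only [smul_eq_mul] at hcc
    have h1 : a * u₁ y ≤ a * g y ζ₁ := mul_le_mul_of_nonneg_left (h₁ y) ha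
    have h2 : b * u₂ y ≤ b * g y ζ₂ := mul_le_mul_of_nonneg_left (h₂ y) hb
    calc (a • u₁ + b • u₂) y = a * u₁ y + b * u₂ y := rfl
      _ ≤ a * g y ζ₁ + b * g y ζ₂ := add_le_add h1 h2
      _ ≤ g y (a • ζ₁ + b • ζ₂) := hcc
  have hdisj : Disjoint O C := by
    rw [Set.disjoint_left]
    rintro u hu ⟨ζ, hζ, hle⟩
    obtain ⟨y, hy⟩ := hv ζ hζ
    have : v < u y := hu y (Set.mem_univ y)
    exact absurd (lt_of_lt_of_le this (hle y)) (not_lt.2 hy)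
  obtain ⟨φ, c, hOlt, hCge⟩ := geometric_hahn_banach_open hOconv hOopen hCconv hdisj
  set lam : k → ℝ := fun y => -φ (Pi.single y 1) with hlam
  have hdecomp : ∀ u : k → ℝ, φ u = -∑ y, lam y * u y := by
    intro u
    have hu : u = ∑ y, u y • (Pi.single y (1:ℝ) : k → ℝ) := by
      funext z
      simp [Finset.sum_apply, Pi.single_apply, mul_comm]
    calc φ u = φ (∑ y, u y • (Pi.single y (1:ℝ) : k → ℝ)) := by rw [← hu]
      _ = ∑ y, u y * φ (Pi.single y 1) := by
          rw [map_sum]; simp [smul_eq_mul]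
      _ = -∑ y, lam y * u y := by
          rw [← Finset.sum_neg_distrib]
          congr 1; funext y; simp only [hlam]; ring
  have hmemO : ∀ ε > 0, (fun _ : k => v + ε) ∈ O := by
    intro ε hε y _
    simpa using lt_add_of_pos_right v hε
  set p : ℝ := φ (fun _ : k => v + 1) with hp
  have hlam0 : ∀ y, 0 ≤ lam y := by
    intro y
    by_contra hneg
    push_neg at hneg
    set T : ℝ := max 1 ((c - p) / (-lam y) + 1) with hT
    have hT1 : (1:ℝ) ≤ T := le_max_left _ _
    have hTpos : 0 < T := lt_of_lt_of_le one_pos hT1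
    set u : k → ℝ := fun z => (v + 1) + (if z = y then T else 0) with hu
    have hmem : u ∈ O := by
      intro z _
      simp only [hu, Set.mem_Ioi]
      split_ifs <;> linarith
    have hlt := hOlt _ hmem
    have hsum : ∑ z, lam z * u z = (∑ z, lam z * (v + 1)) + lam y * T := by
      simp only [hu, mul_add, Finset.sum_add_distrib]
      congr 1
      rw [Finset.sum_congr rfl (fun z _ => by rw [mul_ite, mul_zero])]
      simp [Finset.sum_ite_eq']
    have hpval : p = -∑ z, lam z * (v + 1) := by rw [hp, hdecomp]
    rw [hdecomp, hsum] at hlt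
    have hpos : 0 < -lam y := by linarith
    have hT2 : (c - p) / (-lam y) + 1 ≤ T := le_max_right _ _
    have h3 : (c - p) / (-lam y) < T := by linarith
    have h4 : c - p < T * (-lam y) := (div_lt_iff₀ hpos).1 h3
    -- hlt : -((∑ z, lam z * (v+1)) + lam y * T) < c, i.e. p - lam y * T < c
    have : p - lam y * T < c := by rw [hpval]; linarith
    nlinarith
  set S : ℝ := ∑ y, lam y with hS
  have hS0 : 0 ≤ S := Finset.sum_nonneg fun y _ => hlam0 y
  have hSpos : 0 < S := by
    rcases hS0.lt_or_eq with h | h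
    · exact h
    · exfalso
      have hall : ∀ y, lam y = 0 := fun y =>
        (Finset.sum_eq_zero_iff_of_nonneg (fun y _ => hlam0 y)).1 h.symm y (Finset.mem_univ y)
      have hphi0 : ∀ u : k → ℝ, φ u = 0 := by
        intro u; rw [hdecomp]; simp [hall]
      obtain ⟨ζ₀, hζ₀⟩ := hZne
      have h1 : (0:ℝ) < c := by
        have := hOlt _ (hmemO 1 one_pos); rwa [hphi0] at this
      have h2 : c ≤ 0 := by
        have hcm : (fun y => g y ζ₀) ∈ C := ⟨ζ₀, hζ₀, fun y => le_rfl⟩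
        have := hCge _ hcm; rwa [hphi0] at this
      linarith
  have hcv : -c ≤ v * S := by
    refine le_of_forall_pos_lt_add ?_
    intro ε hε
    have hmem := hmemO (ε / S) (div_pos hε hSpos)
    have hlt := hOlt _ hmem
    rw [hdecomp] at hlt
    have hsum : ∑ y, lam y * (v + ε / S) = v * S + ε := by
      rw [← Finset.sum_mul, ← hS, mul_add, mul_comm S v, mul_div_cancel₀ ε (ne_of_gt hSpos)]
    rw [hsum] at hlt
    linarith
  refine ⟨fun y => lam y / S, fun y => div_nonneg (hlam0 y) hS0, ?_, ?_⟩
  · rw [← Finset.sum_div, ← hS, div_self (ne_of_gt hSpos)]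
  · intro ζ hζ
    have hcm : (fun y => g y ζ) ∈ C := ⟨ζ, hζ, fun y => le_rfl⟩
    have h1 := hCge _ hcm
    rw [hdecomp] at h1
    have h2 : ∑ y, lam y * g y ζ ≤ v * S := by linarith
    have h3 : ∑ y, lam y / S * g y ζ = (∑ y, lam y * g y ζ) / S := by
      rw [Finset.sum_div]; exact Finset.sum_congr rfl fun y _ => by ring
    rw [h3, div_le_iff₀ hSpos]
    linarith [mul_comm v S]

lemma exists_le_weighted {ι : Type*} [Fintype ι] [Nonempty ι] (w a : ι → ℝ)
    (h0 : ∀ i, 0 ≤ w i) (h1 : ∑ i, w i = 1) : ∃ i, a i ≤ ∑ i, w i * a i := by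
  obtain ⟨i0, -, hmin⟩ := Finset.exists_min_image Finset.univ a Finset.univ_nonempty
  refine ⟨i0, ?_⟩
  have : a i0 = ∑ i, w i * a i0 := by rw [← Finset.sum_mul, h1, one_mul]
  rw [this]
  exact Finset.sum_le_sum fun i _ =>
    mul_le_mul_of_nonneg_left (hmin i (Finset.mem_univ i)) (h0 i)

lemma exists_tuple {n : ℕ} (s : Finset (Fin n → ℝ)) (p : Fin n → ℝ)
    (hp : p ∈ convexHull ℝ (s : Set (Fin n → ℝ))) :
    ∃ (t : Fin (n+1) → {y // y ∈ s}) (w : Fin (n+1) → ℝ),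
      (∀ i, 0 ≤ w i) ∧ (∑ i, w i = 1) ∧ (∑ i, w i • ((t i : Fin n → ℝ))) = p := by
  classical
  obtain ⟨ι, hfin, z, w, hrange, hai, hwpos, hw1, hzp⟩ :=
    eq_pos_convex_span_of_mem_convexHull hp
  letI := hfin
  haveI : Nonempty ι := by
    by_contra h
    rw [not_nonempty_iff] at h
    rw [Finset.sum_eq_zero (fun i _ => (h.false i).elim)] at hw1
    norm_num at hw1
  have hcard : Fintype.card ι ≤ n + 1 := by
    have h1 := hai.card_le_finrank_succ
    have h2 : Module.finrank ℝ ↥(vectorSpan ℝ (Set.range z)) ≤ Module.finrank ℝ (Fin n → ℝ) :=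
      Submodule.finrank_le _
    have h3 : Module.finrank ℝ (Fin n → ℝ) = n := by simp
    omega
  -- pad with a dummy summand
  have hcard' : Fintype.card (ι ⊕ Fin (n + 1 - Fintype.card ι)) = n + 1 := by
    simp only [Fintype.card_sum, Fintype.card_fin]
    omega
  let e : Fin (n + 1) ≃ ι ⊕ Fin (n + 1 - Fintype.card ι) :=
    (Fintype.equivFinOfCardEq hcard').symm
  let j0 : ι := Classical.arbitrary ι
  let zext : ι ⊕ Fin (n + 1 - Fintype.card ι) → Fin n → ℝ := Sum.elim z fun _ => z j0
  let wext : ι ⊕ Fin (n + 1 - Fintype.card ι) → ℝ := Sum.elim w fun _ => 0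
  have hmem : ∀ i', zext i' ∈ s := by
    rintro (i | i) <;> exact hrange ⟨_, rfl⟩
  refine ⟨fun i => ⟨zext (e i), hmem _⟩, fun i => wext (e i), ?_, ?_, ?_⟩
  · rintro i
    rcases h : e i with j | j
    · simp [wext, h, le_of_lt (hwpos j)]
    · simp [wext, h]
  · rw [Equiv.sum_comp e wext]
    rw [Fintype.sum_sum_type]
    simp only [wext, Sum.elim_inl, Sum.elim_inr, Finset.sum_const, smul_zero, add_zero,
      smul_eq_mul, mul_zero]
    exact hw1
  · rw [Equiv.sum_comp e (fun i' => wext i' • zext i')]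
    rw [Fintype.sum_sum_type]
    simp only [wext, zext, Sum.elim_inl, Sum.elim_inr, zero_smul, Finset.sum_const,
      smul_zero, add_zero]
    exact hzp

lemma affine_sum_helper {n : ℕ} {ι : Type*} [Fintype ι] (L : (Fin n → ℝ) →ₗ[ℝ] ℝ) (c : ℝ)
    (w : ι → ℝ) (hw : ∑ i, w i = 1) (z : ι → Fin n → ℝ) :
    L (∑ i, w i • z i) + c = ∑ i, w i * (L (z i) + c) := by
  rw [map_sum]
  simp_rw [map_smul, smul_eq_mul, mul_add, Finset.sum_add_distrib, ← Finset.sum_mul, hw, one_mul]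

lemma core_minimax {m n : ℕ} (Z : Set (Fin m → ℝ)) (hZne : Z.Nonempty)
    (hZcomp : IsCompact Z) (hZconv : Convex ℝ Z)
    (s : Finset (Fin n → ℝ)) (hs : s.Nonempty)
    (g : (Fin n → ℝ) → (Fin m → ℝ) → ℝ)
    (hlin : ∀ ζ ∈ Z, ∃ (L : (Fin n → ℝ) →ₗ[ℝ] ℝ) (c : ℝ), ∀ y, g y ζ = L y + c)
    (hconc : ∀ y, ConcaveOn ℝ Z (fun ζ => g y ζ))
    (hcont : ∀ y, ContinuousOn (fun ζ => g y ζ) Z) :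
    (⨆ ζ : Z, ⨅ y : (s : Finset (Fin n → ℝ)), g y.1 ζ.1)
      = ⨅ t : Fin (n + 1) → (s : Finset (Fin n → ℝ)),
          ⨆ ζ : Z, ⨅ i : Fin (n + 1), g (t i).1 ζ.1 := by
  classical
  haveI : Nonempty Z := hZne.to_subtype
  haveI : Nonempty {y // y ∈ s} := ⟨⟨hs.choose, hs.choose_spec⟩⟩
  have hbdd : ∀ y : Fin n → ℝ, ∃ M, ∀ ζ ∈ Z, g y ζ ≤ M := by
    intro y
    obtain ⟨M, hM⟩ := (hZcomp.image_of_continuousOn (hcont y)).bddAbove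
    exact ⟨M, fun ζ hζ => hM ⟨ζ, hζ, rfl⟩⟩
  have hbddA : BddAbove (Set.range fun ζ : Z => ⨅ y : {y // y ∈ s}, g y.1 ζ.1) := by
    obtain ⟨M, hM⟩ := hbdd (Classical.arbitrary {y // y ∈ s}).1
    refine ⟨M, ?_⟩
    rintro _ ⟨ζ, rfl⟩
    exact le_trans (ciInf_le (Set.finite_range _).bddBelow (Classical.arbitrary _)) (hM ζ ζ.2)
  have hbddB : ∀ t : Fin (n+1) → {y // y ∈ s},
      BddAbove (Set.range fun ζ : Z => ⨅ i : Fin (n+1), g (t i).1 ζ.1) := by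
    intro t
    obtain ⟨M, hM⟩ := hbdd (t 0).1
    refine ⟨M, ?_⟩
    rintro _ ⟨ζ, rfl⟩
    exact le_trans (ciInf_le (Set.finite_range _).bddBelow 0) (hM ζ ζ.2)
  set v : ℝ := ⨆ ζ : Z, ⨅ y : {y // y ∈ s}, g y.1 ζ.1 with hvdef
  apply le_antisymm
  · refine le_ciInf fun t => ciSup_le fun ζ => ?_
    refine le_trans ?_ (le_ciSup (hbddB t) ζ)
    exact le_ciInf fun i => ciInf_le (Set.finite_range _).bddBelow (t i)
  · -- hard direction
    have hv' : ∀ ζ ∈ Z, ∃ y : {y // y ∈ s}, g y.1 ζ ≤ v := by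
      intro ζ hζ
      obtain ⟨y₀, -, hmin⟩ := Finset.exists_min_image Finset.univ
        (fun y : {y // y ∈ s} => g y.1 ζ) Finset.univ_nonempty
      have h1 : g y₀.1 ζ ≤ ⨅ y : {y // y ∈ s}, g y.1 ζ :=
        le_ciInf fun y' => hmin y' (Finset.mem_univ _)
      exact ⟨y₀, h1.trans (le_ciSup hbddA (⟨ζ, hζ⟩ : Z))⟩
    obtain ⟨μ, hμ0, hμ1, hμv⟩ := exists_mixed_weights Z hZne hZconv
      (fun (y : {y // y ∈ s}) ζ => g y.1 ζ) (fun y => hconc y.1) v hv'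
    set p : Fin n → ℝ := ∑ y : {y // y ∈ s}, μ y • (y.1 : Fin n → ℝ) with hpdef
    have hpmem : p ∈ convexHull ℝ (s : Set (Fin n → ℝ)) := by
      rw [hpdef, ← Finset.centerMass_eq_of_sum_1 _ _ hμ1]
      exact Finset.centerMass_mem_convexHull _ (fun y _ => hμ0 y)
        (by rw [hμ1]; exact one_pos) (fun y _ => y.2)
    have hgp : ∀ ζ ∈ Z, g p ζ ≤ v := by
      intro ζ hζ
      obtain ⟨L, c, hLc⟩ := hlin ζ hζ
      have heq : g p ζ = ∑ y : {y // y ∈ s}, μ y * g y.1 ζ := by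
        rw [hLc, hpdef, affine_sum_helper L c μ hμ1]
        exact Finset.sum_congr rfl fun y _ => by rw [hLc]
      rw [heq]
      exact hμv ζ hζ
    obtain ⟨t, w, hw0, hw1, hwt⟩ := exists_tuple s p hpmem
    have hkey : ∀ ζ : Z, (⨅ i : Fin (n+1), g (t i).1 ζ.1) ≤ v := by
      intro ζ
      obtain ⟨L, c, hLc⟩ := hlin ζ.1 ζ.2
      have hgpt : g p ζ.1 = ∑ i, w i * g (t i).1 ζ.1 := by
        rw [hLc, ← hwt, affine_sum_helper L c w hw1]
        exact Finset.sum_congr rfl fun i _ => by rw [hLc]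
      obtain ⟨i0, hi0⟩ := exists_le_weighted w (fun i => g (t i).1 ζ.1) hw0 hw1
      refine le_trans (ciInf_le (Set.finite_range _).bddBelow i0) ?_
      exact hi0.trans (le_of_eq_of_le hgpt.symm (hgp ζ.1 ζ.2))
    exact le_trans (ciInf_le (Set.finite_range _).bddBelow t) (ciSup_le hkey)

/-- Two-stage adjustable robust optimization with objective uncertainty:
the inner recourse minimization can be replaced by choosing `n+1` candidate
recourse solutions up front. -/
theorem two_stage_caratheodory_reformulation
    {α : Type*} (m n : ℕ)
    (Z : Set (Fin m → ℝ)) (hZne : Z.Nonempty) (hZcomp : IsCompact Z)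
    (hZconv : Convex ℝ Z)
    (X' : Set α) (hX'ne : X'.Nonempty)
    (X : α → Finset (Fin n → ℝ))
    (hXne : ∀ x ∈ X', (X x).Nonempty)
    (f : α → (Fin n → ℝ) → (Fin m → ℝ) → ℝ)
    (hlin : ∀ x ∈ X', ∀ ζ ∈ Z, ∃ (L : (Fin n → ℝ) →ₗ[ℝ] ℝ) (c : ℝ),
      ∀ y : Fin n → ℝ, f x y ζ = L y + c)
    (hconc : ∀ x ∈ X', ∀ y : Fin n → ℝ, ConcaveOn ℝ Z (fun ζ => f x y ζ))
    (hcont : ∀ x ∈ X', ∀ y : Fin n → ℝ, ContinuousOn (fun ζ => f x y ζ) Z) :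
    (⨅ x : X', ⨆ ζ : Z, ⨅ y : (X x.1 : Finset (Fin n → ℝ)), f x.1 y.1 ζ.1)
      = ⨅ x : X', ⨅ t : Fin (n + 1) → (X x.1 : Finset (Fin n → ℝ)),
          ⨆ ζ : Z, ⨅ i : Fin (n + 1), f x.1 (t i).1 ζ.1 := by
  refine iInf_congr fun x => ?_
  exact core_minimax Z hZne hZcomp hZconv (X x.1) (hXne x.1 x.2) (f x.1)
    (hlin x.1 x.2) (hconc x.1 x.2) (hcont x.1 x.2)
end

section
/- Let φ be a boolean formula in CNF over variables partitioned as X ∪ Y ∪ Z. Consider the two-player game: player 1 assigns X; player 2 picks Y' ⊆ Y with |Y'| ≤ Γ, forcing those variables to 0; player 1 assigns the remaining variables of Y ∪ Z; player 1 wins iff φ is satisfied. Formally this is the predicate ∃ f_X : X → {0,1}, ∀ Y' ⊆ Y with |Y'| ≤ Γ, ∃ an assignment g of Y ∪ Z with g(y)=0 for all y∈Y', such that φ(f_X, g) is true. Prove: for the construction of the paper's reduction, this predicate for the constructed instance (φ', X', Y', Z', Γ=n) is equivalent to the ∃∀∃ predicate ∃ f_A ∀ f_B ∃ f_C : ψ(f_A,f_B,f_C),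 where ψ is a CNF formula over A ∪ B ∪ C with |A|=|B|=|C|=n. -/
/-! The reduction from ∃∀∃-SAT to R-Adj-SAT (robust adjustable SAT with
budgeted uncertainty) and its correctness. -/

/-- Variables of the ∃∀∃-SAT instance: `A ⊕ B ⊕ C`, each of size `n`. -/
abbrev Var3 (n : ℕ) := Fin n ⊕ (Fin n ⊕ Fin n)

/-- Variables of the constructed R-Adj-SAT instance:
`X = {x_1,…,x_n}`, `Y = {y_i^t, y_i^f}`, `Z = {z_1,…,z_n, s_1,…,s_n, s}`. -/
abbrev NewVar (n : ℕ) := Fin n ⊕ ((Fin n × Bool) ⊕ (Fin n ⊕ (Fin n ⊕ Unit)))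

/-- A CNF formula over variables `V`: a list of clauses, a clause being a list of
literals `(v, b)` (`b = true` for the positive literal). -/
abbrev CNF (V : Type) := List (List (V × Bool))

/-- An assignment `a` satisfies a CNF formula if every clause contains a literal
evaluating to true. -/
def SatCNF {V : Type} (a : V → Bool) (φ : CNF V) : Prop :=
  ∀ c ∈ φ, ∃ l ∈ c, a l.1 = l.2

def xV {n : ℕ} (i : Fin n) : NewVar n := Sum.inl i
def yV {n : ℕ} (p : Fin n × Bool) : NewVar n := Sum.inr (Sum.inl p)
def zV {n : ℕ} (i : Fin n) : NewVar n := Sum.inr (Sum.inr (Sum.inl i))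
def sV {n : ℕ} (i : Fin n) : NewVar n := Sum.inr (Sum.inr (Sum.inr (Sum.inl i)))
def sTop {n : ℕ} : NewVar n := Sum.inr (Sum.inr (Sum.inr (Sum.inr ())))

/-- Replacement of literals: `a_i ↦ x_i`, `¬a_i ↦ ¬x_i`; `b_i ↦ y_i^t`, `¬b_i ↦ y_i^f`
(both as positive literals); `c_i ↦ z_i`, `¬c_i ↦ ¬z_i`. -/
def replaceLit {n : ℕ} : Var3 n × Bool → NewVar n × Bool
  | (Sum.inl i, b) => (xV i, b)
  | (Sum.inr (Sum.inl i), b) => (yV (i, b), true)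
  | (Sum.inr (Sum.inr i), b) => (zV i, b)

/-- The constructed formula `φ'`: for each clause `C` of `ψ` the clause `r(C) ∨ s`;
the clauses `¬s_i ∨ y_i^t` and `¬s_i ∨ y_i^f`; and the clause `¬s ∨ s_1 ∨ … ∨ s_n`. -/
def reducedFormula {n : ℕ} (ψ : CNF (Var3 n)) : CNF (NewVar n) :=
  (ψ.map (fun c => c.map replaceLit ++ [(sTop, true)]))
    ++ ((List.finRange n).map (fun i => [(sV i, false), (yV (i, true), true)]))
    ++ ((List.finRange n).map (fun i => [(sV i, false), (yV (i, false), true)]))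
    ++ [(sTop, false) :: (List.finRange n).map (fun i => (sV i, true))]

/-- The constructed R-Adj-SAT instance (with budget `Γ = n`) is a yes-instance iff the
original ∃∀∃-SAT instance is a yes-instance. -/
theorem rAdjSAT_reduction_correct (n : ℕ) (ψ : CNF (Var3 n)) :
    (∃ fX : Fin n → Bool,
      ∀ Y' : Finset (Fin n × Bool), Y'.card ≤ n →
        ∃ g : NewVar n → Bool,
          (∀ i, g (xV i) = fX i) ∧ (∀ p ∈ Y', g (yV p) = false) ∧
            SatCNF g (reducedFormula ψ))
    ↔ (∃ fA : Fin n → Bool, ∀ fB : Fin n → Bool, ∃ fC : Fin n → Bool,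
        SatCNF (Sum.elim fA (Sum.elim fB fC)) ψ) := by
  constructor
  · rintro ⟨fX, hfX⟩
    refine ⟨fX, fun fB => ?_⟩
    obtain ⟨g, hgx, hgy, hsat⟩ := hfX (Finset.univ.image (fun i => (i, !fB i)))
      (le_trans Finset.card_image_le (by simp))
    have hy : ∀ i, g (yV (i, !fB i)) = false := fun i =>
      hgy _ (Finset.mem_image_of_mem _ (Finset.mem_univ i))
    have hs : g sTop = false := by
      by_contra h
      have hs' : g sTop = true := by simpa using h
      obtain ⟨l, hl, hval⟩ := hsat ((sTop, false) :: (List.finRange n).map (fun i => (sV i, true)))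
        (by simp [reducedFormula])
      rcases List.mem_cons.1 hl with rfl | hl
      · rw [hs'] at hval; simp at hval
      · obtain ⟨i, -, rfl⟩ := List.mem_map.1 hl
        have h1 := hsat [(sV i, false), (yV (i, true), true)] (by
          unfold reducedFormula
          exact List.mem_append_left _ (List.mem_append_left _ (List.mem_append_right _
            (List.mem_map.2 ⟨i, List.mem_finRange i, rfl⟩))))
        have h2 := hsat [(sV i, false), (yV (i, false), true)] (by
          unfold reducedFormula
          exact List.mem_append_left _ (List.mem_append_right _
            (List.mem_map.2 ⟨i, List.mem_finRange i, rfl⟩)))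
        simp only [List.mem_cons, List.mem_singleton] at h1 h2
        have hyt : g (yV (i, true)) = true := by
          obtain ⟨l, hl, hv⟩ := h1
          rcases hl with rfl | rfl | h
          · rw [hval] at hv; simp at hv
          · exact hv
          · simp at h
        have hyf : g (yV (i, false)) = true := by
          obtain ⟨l, hl, hv⟩ := h2
          rcases hl with rfl | rfl | h
          · rw [hval] at hv; simp at hv
          · exact hv
          · simp at h
        have hyi := hy i
        cases hb : fB i
        · rw [hb] at hyi; simp only [Bool.not_false] at hyi; rw [hyi] at hyt; simp at hyt
        · rw [hb] at hyi; simp only [Bool.not_true] at hyi; rw [hyi] at hyf; simp at hyf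
    refine ⟨fun i => g (zV i), fun c hc => ?_⟩
    obtain ⟨l, hl, hval⟩ := hsat (c.map replaceLit ++ [(sTop, true)]) (by
      simp [reducedFormula]; exact Or.inl ⟨c, hc, rfl⟩)
    rcases List.mem_append.1 hl with hl | hl
    · obtain ⟨⟨v, b⟩, hl0, rfl⟩ := List.mem_map.1 hl
      refine ⟨(v, b), hl0, ?_⟩
      rcases v with i | i | i
      · simpa [replaceLit, hgx i] using hval
      · simp only [replaceLit] at hval
        have hb : b = fB i := by
          by_contra hb
          have : b = !fB i := by cases b <;> cases hfb : fB i <;> simp_all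
          rw [this, hy i] at hval; simp at hval
        simp [hb]
      · simpa [replaceLit] using hval
    · simp only [List.mem_singleton] at hl
      subst hl
      rw [hs] at hval; simp at hval
  · rintro ⟨fA, hA⟩
    refine ⟨fA, fun Y' hY' => ?_⟩
    by_cases hcase : ∃ i, (i, true) ∈ Y' ∧ (i, false) ∈ Y'
    · obtain ⟨j, hjt, hjf⟩ := hcase
      have hex : ∃ i, (i, true) ∉ Y' ∧ (i, false) ∉ Y' := by
        by_contra h
        push_neg at h
        set f : Fin n → Fin n × Bool := fun i => if (i, true) ∈ Y' then (i, true) else (i, false)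
          with hf
        have hinj : Function.Injective f := by
          intro a b hab
          by_cases ha : (a, true) ∈ Y' <;> by_cases hb : (b, true) ∈ Y' <;>
            simp [f, ha, hb, Prod.ext_iff] at hab <;> tauto
        have hsub : Finset.univ.image f ⊆ Y' := by
          intro p hp
          obtain ⟨i, -, rfl⟩ := Finset.mem_image.1 hp
          simp only [f]
          split
          · assumption
          · exact h i (by assumption)
        have hnot : (j, false) ∉ Finset.univ.image f := by
          simp only [Finset.mem_image, not_exists]
          rintro i ⟨-, hi⟩
          simp only [f] at hi
          split at hi
          · simp at hi
          · simp [Prod.ext_iff] at hi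
            obtain ⟨rfl, -⟩ := hi
            tauto
        have hle : (insert (j, false) (Finset.univ.image f)).card ≤ Y'.card :=
          Finset.card_le_card (by
            intro p hp
            rcases Finset.mem_insert.1 hp with rfl | hp
            · exact hjf
            · exact hsub hp)
        rw [Finset.card_insert_of_notMem hnot,
          Finset.card_image_of_injective _ hinj, Finset.card_univ] at hle
        simp at hle
        omega
      obtain ⟨i0, hi0t, hi0f⟩ := hex
      refine ⟨fun v => match v with
        | Sum.inl i => fA i
        | Sum.inr (Sum.inl (j, _)) => decide (j = i0)
        | Sum.inr (Sum.inr (Sum.inl _)) => false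
        | Sum.inr (Sum.inr (Sum.inr (Sum.inl j))) => decide (j = i0)
        | Sum.inr (Sum.inr (Sum.inr (Sum.inr _))) => true, fun i => rfl, ?_, ?_⟩
      · rintro ⟨j, b⟩ hp
        simp only [yV, decide_eq_false_iff_not]
        rintro rfl
        cases b
        · exact hi0f hp
        · exact hi0t hp
      · intro c hc
        simp only [reducedFormula, List.mem_append, List.mem_map, List.mem_singleton] at hc
        rcases hc with ((⟨c0, hc0, rfl⟩ | ⟨i, -, rfl⟩) | ⟨i, -, rfl⟩) | rfl
        · exact ⟨(sTop, true), by simp, rfl⟩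
        · by_cases hij : i = i0
          · exact ⟨(yV (i, true), true), by simp, by simp [yV, hij]⟩
          · exact ⟨(sV i, false), by simp, by simp [sV, hij]⟩
        · by_cases hij : i = i0
          · exact ⟨(yV (i, false), true), by simp, by simp [yV, hij]⟩
          · exact ⟨(sV i, false), by simp, by simp [sV, hij]⟩
        · refine ⟨(sV i0, true), ?_, by simp [sV]⟩
          simp only [List.mem_cons, List.mem_map]
          exact Or.inr ⟨i0, List.mem_finRange i0, rfl⟩
    · push_neg at hcase
      set fB : Fin n → Bool := fun i => decide ((i, true) ∉ Y') with hfB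
      obtain ⟨fC, hC⟩ := hA fB
      have hYfB : ∀ p ∈ Y', fB p.1 ≠ p.2 := by
        rintro ⟨j, b⟩ hp
        cases b
        · have := hcase j
          simp only [fB]
          simp only [ne_eq, decide_eq_false_iff_not, not_not]
          tauto
        · simp [fB]
          tauto
      refine ⟨fun v => match v with
        | Sum.inl i => fA i
        | Sum.inr (Sum.inl (j, b)) => decide (fB j = b)
        | Sum.inr (Sum.inr (Sum.inl i)) => fC i
        | Sum.inr (Sum.inr (Sum.inr _)) => false, fun i => rfl, ?_, ?_⟩
      · rintro ⟨j, b⟩ hp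
        simp only [yV, decide_eq_false_iff_not]
        exact hYfB _ hp
      · intro c hc
        simp only [reducedFormula, List.mem_append, List.mem_map, List.mem_singleton] at hc
        rcases hc with ((⟨c0, hc0, rfl⟩ | ⟨i, -, rfl⟩) | ⟨i, -, rfl⟩) | rfl
        · obtain ⟨⟨v, b⟩, hl0, hval⟩ := hC c0 hc0
          refine ⟨replaceLit (v, b), List.mem_append_left _ (List.mem_map.2 ⟨_, hl0, rfl⟩), ?_⟩
          rcases v with i | i | i
          · simpa [replaceLit, xV] using hval
          · simp only [Sum.elim_inr, Sum.elim_inl] at hval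
            simp [replaceLit, yV, hval]
          · simpa [replaceLit, zV] using hval
        · exact ⟨(sV i, false), by simp, rfl⟩
        · exact ⟨(sV i, false), by simp, rfl⟩
        · exact ⟨(sTop, false), by simp, rfl⟩
end

section
/- Let G be a graph containing n pairwise-disjoint 'blow-up' gadgets, where gadget i is a complete bipartite graph with parts L_i = {x_i^(0),...,x_i^(N)} and R_i = {x̄_i^(0),...,x̄_i^(N)}, each of size N+1, and suppose the number of vertices of G outside all gadgets is at most N. Assume every maximal independent set of G contains, for each i, either all of L_i or all of R_i (and nothing else from the gadget). Then for any two maximal independent sets I, I' of G: |I ∩ I'| ≥ |I| - N holds if and only if I and I' make the same choice (L_i vs R_i) in every gadget i. -/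
open Finset

def IsIndepSet {V : Type*} (G : SimpleGraph V) (S : Set V) : Prop :=
  S.Pairwise fun u v => ¬ G.Adj u v

/-- A maximal independent set (given as a finset). -/
def IsMaxIndep {V : Type*} [Fintype V] [DecidableEq V] (G : SimpleGraph V)
    (I : Finset V) : Prop :=
  IsIndepSet G (I : Set V) ∧
    ∀ J : Finset V, IsIndepSet G (J : Set V) → I ⊆ J → I = J

/-- Blow-up gadget lemma: if a graph contains `n` disjoint complete-bipartite blow-up
gadgets with parts of size `N+1`, at most `N` vertices lie outside the gadgets, and
every maximal independent set picks one full side of each gadget, then two maximal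
independent sets `I, I'` satisfy `|I ∩ I'| ≥ |I| - N` iff they make the same side
choice in every gadget. -/
theorem blowup_gadget_agreement
    {V : Type*} [Fintype V] [DecidableEq V] (G : SimpleGraph V)
    (n N : ℕ) (L R : Fin n → Finset V)
    (hcard : ∀ i, (L i).card = N + 1 ∧ (R i).card = N + 1)
    (hdisj : ∀ i j, i ≠ j → Disjoint (L i ∪ R i) (L j ∪ R j))
    (hLR : ∀ i, Disjoint (L i) (R i))
    (hbip : ∀ i, ∀ u ∈ L i, ∀ v ∈ R i, G.Adj u v)
    (houtside : (Finset.univ \ Finset.univ.biUnion (fun i => L i ∪ R i)).card ≤ N)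
    (hchoice : ∀ I : Finset V, IsMaxIndep G I → ∀ i,
      (L i ⊆ I ∧ I ∩ R i = ∅) ∨ (R i ⊆ I ∧ I ∩ L i = ∅))
    (I I' : Finset V) (hI : IsMaxIndep G I) (hI' : IsMaxIndep G I') :
    I.card - N ≤ (I ∩ I').card ↔ ∀ i, (L i ⊆ I ↔ L i ⊆ I') := by
  constructor
  · intro h i
    constructor
    · intro hLi
      by_contra hL'
      rcases hchoice I' hI' i with ⟨h1, _⟩ | ⟨_, h2⟩
      · exact hL' h1
      · have hsub : L i ⊆ I \ I' := by
          intro v hv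
          simp only [mem_sdiff]
          refine ⟨hLi hv, fun hv' => ?_⟩
          have : v ∈ I' ∩ L i := mem_inter.2 ⟨hv', hv⟩
          simp [h2] at this
        have ha : N + 1 ≤ (I \ I').card := (hcard i).1 ▸ card_le_card hsub
        have hb : N + 1 ≤ I.card := (hcard i).1 ▸ card_le_card hLi
        have hc : (I ∩ I').card + (I \ I').card = I.card :=
          card_inter_add_card_sdiff I I'
        omega
    · intro hLi'
      by_contra hL
      rcases hchoice I hI i with ⟨h1, _⟩ | ⟨hR, _⟩
      · exact hL h1
      rcases hchoice I' hI' i with ⟨_, h2'⟩ | ⟨_, h3'⟩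
      · have hsub : R i ⊆ I \ I' := by
          intro v hv
          simp only [mem_sdiff]
          refine ⟨hR hv, fun hv' => ?_⟩
          have : v ∈ I' ∩ R i := mem_inter.2 ⟨hv', hv⟩
          simp [h2'] at this
        have ha : N + 1 ≤ (I \ I').card := (hcard i).2 ▸ card_le_card hsub
        have hb : N + 1 ≤ I.card := (hcard i).2 ▸ card_le_card hR
        have hc : (I ∩ I').card + (I \ I').card = I.card :=
          card_inter_add_card_sdiff I I'
        omega
      · have hne : (L i).Nonempty := card_pos.1 (by rw [(hcard i).1]; omega)
        obtain ⟨w, hw⟩ := hne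
        have : w ∈ I' ∩ L i := mem_inter.2 ⟨hLi' hw, hw⟩
        simp [h3'] at this
  · intro h
    have hsub : I \ I' ⊆ Finset.univ \ Finset.univ.biUnion (fun i => L i ∪ R i) := by
      intro v hv
      rw [mem_sdiff] at hv ⊢
      refine ⟨mem_univ v, fun hmem => ?_⟩
      rw [mem_biUnion] at hmem
      obtain ⟨i, -, hvi⟩ := hmem
      rcases hchoice I hI i with ⟨hL, hRe⟩ | ⟨hR, hLe⟩
      · have hvL : v ∈ L i := by
          rcases mem_union.1 hvi with h' | h'
          · exact h'
          · exact absurd (mem_inter.2 ⟨hv.1, h'⟩) (by simp [hRe])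
        exact hv.2 ((h i).1 hL hvL)
      · have hvR : v ∈ R i := by
          rcases mem_union.1 hvi with h' | h'
          · exact absurd (mem_inter.2 ⟨hv.1, h'⟩) (by simp [hLe])
          · exact h'
        rcases hchoice I' hI' i with ⟨hL', _⟩ | ⟨hR', _⟩
        · have hLsub : L i ⊆ I := (h i).2 hL'
          have hne : (L i).Nonempty := card_pos.1 (by rw [(hcard i).1]; omega)
          obtain ⟨w, hw⟩ := hne
          exact absurd (mem_inter.2 ⟨hLsub hw, hw⟩) (by simp [hLe])
        · exact hv.2 (hR' hvR)
    have h1 := card_le_card hsub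
    have h3 := card_inter_add_card_sdiff I I'
    omega
end

section
/- Consider the two-stage robust independent set instance built from an R-Adj-SAT instance (φ, X, Y, Z, Γ) with |X|=|Y|=|Z|=n and ℓ clauses: graph G(φ), first-stage costs C_v = 1 for v in V_1 (the 2n X-literal vertices) and 0 otherwise; second-stage nominal costs c̲_v = 0 for v ∈ V_1 and 1 otherwise; degraded costs c̄_v = 0 for v ∈ V_1 ∪ V_2 (V_2 the n positive Y-literal vertices y_1,...,y_n) and 1 otherwise; adversary budget Γ' = Γ. Then the robust value ROB = max_{x∈{0,1}^V} min_{c∈U_Γ} max_{y: x+y indicator of an independent set} (C·x + c·y) satisfies ROB ≥ 3n + ℓ if and only if (φ, X, Y, Z, Γ) is a yes-instance of R-Adj-SAT. -/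
open Finset

/-! Two-stage robust independent set with discrete budgeted uncertainty:
correctness of the reduction from R-Adj-SAT. -/

/-- Variables of the R-Adj-SAT instance: `X ⊕ Y ⊕ Z`, each of size `n`. -/
abbrev RVar (n : ℕ) := Fin n ⊕ (Fin n ⊕ Fin n)

/-- Vertices of `G(φ)`: a literal vertex per variable/sign, and a vertex per
(clause, position). -/
abbrev RVtx (n ℓ : ℕ) := (RVar n × Bool) ⊕ (Fin ℓ × Fin 3)

/-- The SAT-to-independent-set graph `G(φ)`. -/
def satGraph (n ℓ : ℕ) (φ : Fin ℓ → Fin 3 → RVar n × Bool) :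
    SimpleGraph (RVtx n ℓ) :=
  SimpleGraph.fromRel (fun u v =>
    (∃ (i : RVar n) (b : Bool), u = Sum.inl (i, b) ∧ v = Sum.inl (i, !b)) ∨
    (∃ (c : Fin ℓ) (j j' : Fin 3), j ≠ j' ∧ u = Sum.inr (c, j) ∧ v = Sum.inr (c, j')) ∨
    (∃ (c : Fin ℓ) (j : Fin 3), u = Sum.inr (c, j) ∧
      v = Sum.inl ((φ c j).1, !(φ c j).2)))

/-- `V_1`: the `2n` X-literal vertices. -/
def inV1 {n ℓ : ℕ} : RVtx n ℓ → Bool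
  | Sum.inl (Sum.inl _, _) => true
  | _ => false

/-- `V_2`: the `n` positive Y-literal vertices `y_1, …, y_n`. -/
def inV2 {n ℓ : ℕ} : RVtx n ℓ → Bool
  | Sum.inl (Sum.inr (Sum.inl _), b) => b
  | _ => false

/-- First-stage costs. -/
def Cfst {n ℓ : ℕ} (v : RVtx n ℓ) : ℕ := if inV1 v then 1 else 0

/-- Nominal second-stage costs. -/
def cNom {n ℓ : ℕ} (v : RVtx n ℓ) : ℕ := if inV1 v then 0 else 1

/-- Degraded second-stage costs. -/
def cDev {n ℓ : ℕ} (v : RVtx n ℓ) : ℕ := if inV1 v || inV2 v then 0 else 1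

section Aux

variable {n ℓ : ℕ}

/-- Project a vertex to its variable or clause. -/
def fmap : RVtx n ℓ → RVar n ⊕ Fin ℓ
  | Sum.inl (v, _) => Sum.inl v
  | Sum.inr (c, _) => Sum.inr c

lemma satGraph_adj_of (φ : Fin ℓ → Fin 3 → RVar n × Bool) {u v : RVtx n ℓ}
    (hne : u ≠ v)
    (h : (∃ (i : RVar n) (b : Bool), u = Sum.inl (i, b) ∧ v = Sum.inl (i, !b)) ∨
      (∃ (c : Fin ℓ) (j j' : Fin 3), j ≠ j' ∧ u = Sum.inr (c, j) ∧ v = Sum.inr (c, j')) ∨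
      (∃ (c : Fin ℓ) (j : Fin 3), u = Sum.inr (c, j) ∧
        v = Sum.inl ((φ c j).1, !(φ c j).2))) :
    (satGraph n ℓ φ).Adj u v := by
  rw [satGraph, SimpleGraph.fromRel_adj]
  exact ⟨hne, Or.inl h⟩

lemma fmap_injOn (φ : Fin ℓ → Fin 3 → RVar n × Bool) {S : Set (RVtx n ℓ)}
    (hS : IsIndepSet (satGraph n ℓ φ) S) : S.InjOn fmap := by
  intro u hu v hv heq
  by_contra hne
  apply hS hu hv hne
  match u, v with
  | Sum.inl (w, b), Sum.inl (w', b') =>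
    simp only [fmap, Sum.inl.injEq] at heq
    subst heq
    have hb : b' = !b := by
      cases b <;> cases b' <;> simp_all
    subst hb
    exact satGraph_adj_of φ hne (Or.inl ⟨w, b, rfl, rfl⟩)
  | Sum.inl (w, b), Sum.inr (c, j) => simp [fmap] at heq
  | Sum.inr (c, j), Sum.inl (w, b) => simp [fmap] at heq
  | Sum.inr (c, j), Sum.inr (c', j') =>
    simp only [fmap, Sum.inr.injEq] at heq
    subst heq
    have hj : j ≠ j' := by
      intro h; exact hne (by rw [h])
    exact satGraph_adj_of φ hne (Or.inr (Or.inl ⟨c, j, j', hj, rfl, rfl⟩))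

end Aux

/-- The robust two-stage independent set value is at least `3n + ℓ` iff the
R-Adj-SAT instance `(φ, X, Y, Z, Γ)` is a yes-instance. -/
theorem two_stage_indep_set_reduction (n ℓ Γ : ℕ)
    (φ : Fin ℓ → Fin 3 → RVar n × Bool) :
    (∃ x : Finset (RVtx n ℓ),
      ∀ δ : Finset (RVtx n ℓ), δ.card ≤ Γ →
        ∃ y : Finset (RVtx n ℓ), Disjoint x y ∧
          IsIndepSet (satGraph n ℓ φ) ((x ∪ y : Finset (RVtx n ℓ)) : Set (RVtx n ℓ)) ∧
          3 * n + ℓ ≤ (∑ v ∈ x, Cfst v) + ∑ v ∈ y, (if v ∈ δ then cDev v else cNom v))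
    ↔ (∃ fX : Fin n → Bool,
        ∀ Y' : Finset (Fin n), Y'.card ≤ Γ →
          ∃ a : RVar n → Bool,
            (∀ i, a (Sum.inl i) = fX i) ∧
            (∀ i ∈ Y', a (Sum.inr (Sum.inl i)) = false) ∧
            ∀ c : Fin ℓ, ∃ j : Fin 3, a (φ c j).1 = (φ c j).2) := by
    classical
  constructor
  · rintro ⟨x, hx⟩
    have key : ∀ δ : Finset (RVtx n ℓ), δ.card ≤ Γ →
        ∃ y : Finset (RVtx n ℓ), Disjoint x y ∧
          IsIndepSet (satGraph n ℓ φ) ((x ∪ y : Finset (RVtx n ℓ)) : Set (RVtx n ℓ)) ∧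
          (∀ i : Fin n, ∃ b, Sum.inl (Sum.inl i, b) ∈ x) ∧
          (∀ w : Fin n ⊕ Fin n, ∃ b, Sum.inl (Sum.inr w, b) ∈ y ∧
            (Sum.inl (Sum.inr w, b) ∈ δ → inV2 (Sum.inl (Sum.inr w, b) : RVtx n ℓ) = false)) ∧
          (∀ c : Fin ℓ, ∃ j, Sum.inr (c, j) ∈ y) := by
      intro δ hδ
      obtain ⟨y, hdisj, hind, hval⟩ := hx δ hδ
      set A := x.filter (fun v => inV1 v = true) with hA
      set B := y.filter (fun v => inV1 v = false ∧ (v ∈ δ → inV2 v = false)) with hB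
      have hsum1 : (∑ v ∈ x, Cfst v) = A.card := by
        rw [hA, Finset.card_filter]
        exact Finset.sum_congr rfl fun v _ => by simp [Cfst]
      have hsum2 : (∑ v ∈ y, (if v ∈ δ then cDev v else cNom v)) = B.card := by
        rw [hB, Finset.card_filter]
        refine Finset.sum_congr rfl fun v _ => ?_
        by_cases hv : v ∈ δ
        · cases h1 : inV1 v
          · simp only [cDev, h1, Bool.false_or, if_pos hv]
            cases h2 : inV2 v <;> simp [h2, hv]
          · simp [cDev, h1, hv]
        · cases h1 : inV1 v <;> simp [cNom, h1, hv]
      have hABdisj : Disjoint A B :=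
        hdisj.mono (Finset.filter_subset _ _) (Finset.filter_subset _ _)
      have hDsub : (↑(A ∪ B) : Set (RVtx n ℓ)) ⊆ ↑(x ∪ y) := by
        intro v hv
        simp only [Finset.coe_union, Set.mem_union, Finset.mem_coe] at hv ⊢
        rcases hv with h | h
        · exact Or.inl (Finset.filter_subset _ _ h)
        · exact Or.inr (Finset.filter_subset _ _ h)
      have hinj : Set.InjOn fmap (↑(A ∪ B) : Set (RVtx n ℓ)) :=
        (fmap_injOn φ hind).mono hDsub
      have hcard : ((A ∪ B).image fmap).card = A.card + B.card := by
        rw [Finset.card_image_of_injOn hinj, Finset.card_union_of_disjoint hABdisj]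
      have hcardU : Fintype.card (RVar n ⊕ Fin ℓ) = 3 * n + ℓ := by
        simp [RVar]; ring
      have huniv : (A ∪ B).image fmap = Finset.univ := by
        apply Finset.eq_univ_of_card
        have hle := Finset.card_le_univ ((A ∪ B).image fmap)
        rw [hsum1, hsum2] at hval
        omega
      have hsurj : ∀ t : RVar n ⊕ Fin ℓ, ∃ v ∈ A ∪ B, fmap v = t := by
        intro t
        have ht : t ∈ (A ∪ B).image fmap := huniv ▸ Finset.mem_univ t
        simpa using ht
      refine ⟨y, hdisj, hind, ?_, ?_, ?_⟩
      · intro i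
        obtain ⟨v, hv, hfv⟩ := hsurj (Sum.inl (Sum.inl i))
        obtain (⟨w, b⟩ | ⟨c, j⟩) := v
        · simp only [fmap, Sum.inl.injEq] at hfv
          subst hfv
          refine ⟨b, ?_⟩
          rcases Finset.mem_union.1 hv with h | h
          · exact Finset.mem_filter.1 h |>.1
          · have h2 := (Finset.mem_filter.1 h).2.1
            simp [inV1] at h2
        · simp [fmap] at hfv
      · intro w
        obtain ⟨v, hv, hfv⟩ := hsurj (Sum.inl (Sum.inr w))
        obtain (⟨w', b⟩ | ⟨c, j⟩) := v
        · simp only [fmap, Sum.inl.injEq] at hfv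
          subst hfv
          refine ⟨b, ?_, ?_⟩
          · rcases Finset.mem_union.1 hv with h | h
            · have h2 := (Finset.mem_filter.1 h).2
              simp [inV1] at h2
            · exact Finset.mem_filter.1 h |>.1
          · intro hδv
            rcases Finset.mem_union.1 hv with h | h
            · have h2 := (Finset.mem_filter.1 h).2
              simp [inV1] at h2
            · exact (Finset.mem_filter.1 h).2.2 hδv
        · simp [fmap] at hfv
      · intro c
        obtain ⟨v, hv, hfv⟩ := hsurj (Sum.inr c)
        obtain (⟨w', b⟩ | ⟨c', j⟩) := v
        · simp [fmap] at hfv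
        · simp only [fmap, Sum.inr.injEq] at hfv
          subst hfv
          refine ⟨j, ?_⟩
          rcases Finset.mem_union.1 hv with h | h
          · have h2 := (Finset.mem_filter.1 h).2
            simp [inV1] at h2
          · exact Finset.mem_filter.1 h |>.1
    obtain ⟨y₀, hd₀, hind₀, hX₀, _, _⟩ := key ∅ (by simp)
    have hxsub : (↑x : Set (RVtx n ℓ)) ⊆ ↑(x ∪ y₀) := by
      intro v hv
      simp only [Finset.coe_union, Set.mem_union, Finset.mem_coe] at hv ⊢
      exact Or.inl hv
    have hinjx : Set.InjOn fmap (↑x : Set (RVtx n ℓ)) := (fmap_injOn φ hind₀).mono hxsub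
    set fX : Fin n → Bool := fun i => decide ((Sum.inl (Sum.inl i, true) : RVtx n ℓ) ∈ x)
      with hfXdef
    have huniq : ∀ (i : Fin n) (b : Bool), Sum.inl (Sum.inl i, b) ∈ x → b = fX i := by
      intro i b hb
      cases b with
      | true => exact (decide_eq_true hb).symm
      | false =>
        cases hfx : fX i with
        | false => rfl
        | true =>
          exfalso
          have ht : (Sum.inl (Sum.inl i, true) : RVtx n ℓ) ∈ x :=
            of_decide_eq_true (by rw [hfXdef] at hfx; exact hfx)
          have heq := hinjx (Finset.mem_coe.2 hb) (Finset.mem_coe.2 ht) rfl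
          simp at heq
    refine ⟨fX, ?_⟩
    intro Y' hY'
    set δ := Y'.image (fun i => (Sum.inl (Sum.inr (Sum.inl i), true) : RVtx n ℓ)) with hδdef
    have hδcard : δ.card ≤ Γ := le_trans Finset.card_image_le hY'
    obtain ⟨y, hdisj, hind, hX, hYZ, hC⟩ := key δ hδcard
    refine ⟨fun v => match v with
      | Sum.inl i => fX i
      | Sum.inr w => (hYZ w).choose, fun i => rfl, ?_, ?_⟩
    · intro i hi
      show (hYZ (Sum.inl i)).choose = false
      have hspec := (hYZ (Sum.inl i)).choose_spec
      cases hb : (hYZ (Sum.inl i)).choose with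
      | false => rfl
      | true =>
        exfalso
        rw [hb] at hspec
        have hmemδ : (Sum.inl (Sum.inr (Sum.inl i), true) : RVtx n ℓ) ∈ δ := by
          rw [hδdef]; exact Finset.mem_image_of_mem _ hi
        have h2 := hspec.2 hmemδ
        simp [inV2] at h2
    · intro c
      obtain ⟨j, hj⟩ := hC c
      refine ⟨j, ?_⟩
      set a : RVar n → Bool := fun v => match v with
        | Sum.inl i => fX i
        | Sum.inr w => (hYZ w).choose with hadef
      show a (φ c j).1 = (φ c j).2
      have hamem : ∀ v : RVar n, Sum.inl (v, a v) ∈ x ∪ y := by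
        intro v
        match v with
        | Sum.inl i =>
          obtain ⟨b, hb⟩ := hX i
          have hbe := huniq i b hb
          have : a (Sum.inl i) = b := by rw [hadef]; exact hbe.symm
          rw [this]
          exact Finset.mem_union_left _ hb
        | Sum.inr w =>
          exact Finset.mem_union_right _ (hYZ w).choose_spec.1
      by_contra hne
      have hne' : a (φ c j).1 = !(φ c j).2 := Bool.eq_not_iff.mpr hne
      have hadj : (satGraph n ℓ φ).Adj (Sum.inr (c, j))
          (Sum.inl ((φ c j).1, !(φ c j).2)) :=
        satGraph_adj_of φ (by simp) (Or.inr (Or.inr ⟨c, j, rfl, rfl⟩))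
      have hmem1 : (Sum.inr (c, j) : RVtx n ℓ) ∈ x ∪ y := Finset.mem_union_right _ hj
      have hmem2 : (Sum.inl ((φ c j).1, !(φ c j).2) : RVtx n ℓ) ∈ x ∪ y := by
        rw [← hne']; exact hamem _
      exact hind (Finset.mem_coe.2 hmem1) (Finset.mem_coe.2 hmem2) (by simp) hadj
  · rintro ⟨fX, hfX⟩
    set x : Finset (RVtx n ℓ) :=
      Finset.univ.image (fun i : Fin n => Sum.inl (Sum.inl i, fX i)) with hxdef
    refine ⟨x, ?_⟩
    intro δ hδ
    set Y' := Finset.univ.filter (fun i : Fin n =>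
      (Sum.inl (Sum.inr (Sum.inl i), true) : RVtx n ℓ) ∈ δ) with hY'def
    have hY'card : Y'.card ≤ Γ := by
      refine le_trans (Finset.card_le_card_of_injOn
        (fun i => (Sum.inl (Sum.inr (Sum.inl i), true) : RVtx n ℓ)) ?_ ?_) hδ
      · intro i hi
        rw [hY'def] at hi
        exact (Finset.mem_filter.1 hi).2
      · intro i _ j _ h
        simpa using h
    obtain ⟨a, ha1, ha2, ha3⟩ := hfX Y' hY'card
    choose jc hjc using ha3
    set y1 : Finset (RVtx n ℓ) :=
      Finset.univ.image (fun w : Fin n ⊕ Fin n => Sum.inl (Sum.inr w, a (Sum.inr w)))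
      with hy1def
    set y2 : Finset (RVtx n ℓ) :=
      Finset.univ.image (fun c : Fin ℓ => Sum.inr (c, jc c)) with hy2def
    have hmemS : ∀ v : RVtx n ℓ, v ∈ x ∪ (y1 ∪ y2) ↔
        (∃ w : RVar n, v = Sum.inl (w, a w)) ∨ (∃ c, v = Sum.inr (c, jc c)) := by
      intro v
      constructor
      · intro h
        rcases Finset.mem_union.1 h with h | h
        · rw [hxdef] at h
          simp only [Finset.mem_image, Finset.mem_univ, true_and] at h
          obtain ⟨i, hi⟩ := h
          exact Or.inl ⟨Sum.inl i, by rw [← hi, ha1]⟩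
        · rcases Finset.mem_union.1 h with h | h
          · rw [hy1def] at h
            simp only [Finset.mem_image, Finset.mem_univ, true_and] at h
            obtain ⟨w, hw⟩ := h
            exact Or.inl ⟨Sum.inr w, hw.symm⟩
          · rw [hy2def] at h
            simp only [Finset.mem_image, Finset.mem_univ, true_and] at h
            obtain ⟨c, hc⟩ := h
            exact Or.inr ⟨c, hc.symm⟩
      · intro h
        rcases h with ⟨w, rfl⟩ | ⟨c, rfl⟩
        · cases w with
          | inl i =>
            refine Finset.mem_union_left _ ?_
            rw [hxdef]
            simp only [Finset.mem_image, Finset.mem_univ, true_and]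
            exact ⟨i, by rw [ha1]⟩
          | inr w =>
            refine Finset.mem_union_right _ (Finset.mem_union_left _ ?_)
            rw [hy1def]
            simp only [Finset.mem_image, Finset.mem_univ, true_and]
            exact ⟨w, rfl⟩
        · refine Finset.mem_union_right _ (Finset.mem_union_right _ ?_)
          rw [hy2def]
          simp only [Finset.mem_image, Finset.mem_univ, true_and]
          exact ⟨c, rfl⟩
    have hdisj : Disjoint x (y1 ∪ y2) := by
      rw [Finset.disjoint_left]
      intro v hv hv'
      rw [hxdef] at hv
      simp only [Finset.mem_image, Finset.mem_univ, true_and] at hv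
      obtain ⟨i, rfl⟩ := hv
      rw [hy1def, hy2def] at hv'
      simp at hv'
    have hnor : ∀ u v : RVtx n ℓ, u ∈ x ∪ (y1 ∪ y2) → v ∈ x ∪ (y1 ∪ y2) →
        ¬ ((∃ (i : RVar n) (b : Bool), u = Sum.inl (i, b) ∧ v = Sum.inl (i, !b)) ∨
           (∃ (c : Fin ℓ) (j j' : Fin 3), j ≠ j' ∧ u = Sum.inr (c, j) ∧ v = Sum.inr (c, j')) ∨
           (∃ (c : Fin ℓ) (j : Fin 3), u = Sum.inr (c, j) ∧
             v = Sum.inl ((φ c j).1, !(φ c j).2))) := by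
      intro u v hu hv hr
      rcases hr with ⟨i, b, rfl, rfl⟩ | ⟨c, j, j', hjj, rfl, rfl⟩ | ⟨c, j, rfl, rfl⟩
      · rcases (hmemS _).1 hu with ⟨w, hw⟩ | ⟨c0, hc0⟩
        · rcases (hmemS _).1 hv with ⟨w', hw'⟩ | ⟨c0, hc0⟩
          · rw [Sum.inl.injEq, Prod.mk.injEq] at hw hw'
            obtain ⟨hwi, hb⟩ := hw
            obtain ⟨hwi', hb'⟩ := hw'
            rw [← hwi'] at hb'
            rw [← hwi] at hb
            rw [hb] at hb'
            exact Bool.not_ne_self _ hb'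
          · exact absurd hc0 (by simp)
        · exact absurd hc0 (by simp)
      · rcases (hmemS _).1 hu with ⟨w, hw⟩ | ⟨c0, hc0⟩
        · exact absurd hw (by simp)
        · rcases (hmemS _).1 hv with ⟨w', hw'⟩ | ⟨c0', hc0'⟩
          · exact absurd hw' (by simp)
          · rw [Sum.inr.injEq, Prod.mk.injEq] at hc0 hc0'
            obtain ⟨rfl, rfl⟩ := hc0
            obtain ⟨h1, h2⟩ := hc0'
            exact hjj (by rw [h2, ← h1])
      · rcases (hmemS _).1 hu with ⟨w, hw⟩ | ⟨c0, hc0⟩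
        · exact absurd hw (by simp)
        · rcases (hmemS _).1 hv with ⟨w', hw'⟩ | ⟨c0', hc0'⟩
          · rw [Sum.inr.injEq, Prod.mk.injEq] at hc0
            obtain ⟨rfl, rfl⟩ := hc0
            rw [Sum.inl.injEq, Prod.mk.injEq] at hw'
            obtain ⟨hwv, hwb⟩ := hw'
            have hthis := hjc c
            rw [hwv] at hthis
            rw [← hthis] at hwb
            exact Bool.not_ne_self _ hwb
          · exact absurd hc0' (by simp)
    have hindep : IsIndepSet (satGraph n ℓ φ) (↑(x ∪ (y1 ∪ y2)) : Set (RVtx n ℓ)) := by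
      intro u hu v hv hne hadj
      rw [satGraph, SimpleGraph.fromRel_adj] at hadj
      rcases hadj.2 with h | h
      · exact hnor u v (Finset.mem_coe.1 hu) (Finset.mem_coe.1 hv) h
      · exact hnor v u (Finset.mem_coe.1 hv) (Finset.mem_coe.1 hu) h
    refine ⟨y1 ∪ y2, hdisj, hindep, ?_⟩
    have hy12 : Disjoint y1 y2 := by
      rw [Finset.disjoint_left]
      intro v hv hv'
      rw [hy1def] at hv
      simp only [Finset.mem_image, Finset.mem_univ, true_and] at hv
      obtain ⟨w, rfl⟩ := hv
      rw [hy2def] at hv'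
      simp at hv'
    have hxsum : (∑ v ∈ x, Cfst v) = n := by
      rw [hxdef, Finset.sum_image (fun i _ j _ h => by
        simp only [Sum.inl.injEq, Sum.inr.injEq, Prod.mk.injEq] at h
        exact h.1)]
      simp [Cfst, inV1]
    have hy1sum : (∑ v ∈ y1, (if v ∈ δ then cDev v else cNom v)) = 2 * n := by
      rw [hy1def, Finset.sum_image (fun i _ j _ h => by
        simp only [Sum.inl.injEq, Sum.inr.injEq, Prod.mk.injEq] at h
        exact h.1)]
      have : ∀ w : Fin n ⊕ Fin n,
          (if (Sum.inl (Sum.inr w, a (Sum.inr w)) : RVtx n ℓ) ∈ δ then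
            cDev (Sum.inl (Sum.inr w, a (Sum.inr w)) : RVtx n ℓ)
          else cNom (Sum.inl (Sum.inr w, a (Sum.inr w)) : RVtx n ℓ)) = 1 := by
        intro w
        by_cases hv : (Sum.inl (Sum.inr w, a (Sum.inr w)) : RVtx n ℓ) ∈ δ
        · rw [if_pos hv]
          have h2 : inV2 (Sum.inl (Sum.inr w, a (Sum.inr w)) : RVtx n ℓ) = false := by
            cases w with
            | inl i =>
              show a (Sum.inr (Sum.inl i)) = false
              cases hai : a (Sum.inr (Sum.inl i)) with
              | false => rfl
              | true =>
                exfalso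
                rw [hai] at hv
                have hiY : i ∈ Y' := by
                  rw [hY'def]
                  exact Finset.mem_filter.2 ⟨Finset.mem_univ _, hv⟩
                rw [ha2 i hiY] at hai
                exact Bool.false_ne_true hai
            | inr i => rfl
          simp [cDev, inV1, h2]
        · rw [if_neg hv]
          simp [cNom, inV1]
      rw [Finset.sum_congr rfl (fun w _ => this w)]
      simp [Fintype.card_sum]
      ring
    have hy2sum : (∑ v ∈ y2, (if v ∈ δ then cDev v else cNom v)) = ℓ := by
      rw [hy2def, Finset.sum_image (fun i _ j _ h => by
        simp only [Sum.inl.injEq, Sum.inr.injEq, Prod.mk.injEq] at h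
        exact h.1)]
      have : ∀ c : Fin ℓ,
          (if (Sum.inr (c, jc c) : RVtx n ℓ) ∈ δ then
            cDev (Sum.inr (c, jc c) : RVtx n ℓ)
          else cNom (Sum.inr (c, jc c) : RVtx n ℓ)) = 1 := by
        intro c
        by_cases hv : (Sum.inr (c, jc c) : RVtx n ℓ) ∈ δ <;>
          simp [hv, cDev, cNom, inV1, inV2]
      rw [Finset.sum_congr rfl (fun c _ => this c)]
      simp
    rw [Finset.sum_union hy12, hxsum, hy1sum, hy2sum]
    omega
end

section
/- In the standard 3SAT-to-Hamilton-cycle reduction graph, an XOR-gadget connecting edges e = {a,b} and e' = {a',b'} has the property that every Hamilton cycle of the graph uses exactly one of the two edges e, e' (traversing the gadget's internal ladder accordingly); i.e., it is impossible for a Hamilton cycle to use both or neither of the two connected edges. -/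
/-! The XOR-gadget of the 3SAT-to-Hamilton-cycle reduction: every Hamilton cycle
uses exactly one of the two connected edges. -/

/-- Gadget vertices: the top path `x_1,…,x_6` (with `a = x_1`, `b = x_6`), the bottom
path `z_1,…,z_6` (with `a' = z_1`, `b' = z_6`), and the middle vertices `y_1,…,y_4`. -/
abbrev XorVtx := Fin 6 ⊕ (Fin 6 ⊕ Fin 4)

/-- The gadget's adjacency: consecutive top vertices, consecutive bottom vertices,
and `y_j` joined to `x_{j+1}` and `z_{j+1}`. -/
def xorRel : XorVtx → XorVtx → Prop := fun u v =>
  (∃ i : Fin 5, u = Sum.inl i.castSucc ∧ v = Sum.inl i.succ) ∨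
  (∃ i : Fin 5, u = Sum.inr (Sum.inl i.castSucc) ∧ v = Sum.inr (Sum.inl i.succ)) ∨
  (∃ j : Fin 4, u = Sum.inr (Sum.inr j) ∧
    (v = Sum.inl j.succ.castSucc ∨ v = Sum.inr (Sum.inl j.succ.castSucc)))

/-- The internal vertices of the gadget (all but the four endpoints `a, b, a', b'`). -/
def xorInternal : XorVtx → Prop
  | Sum.inl i => i ≠ 0 ∧ i ≠ 5
  | Sum.inr (Sum.inl i) => i ≠ 0 ∧ i ≠ 5
  | Sum.inr (Sum.inr _) => True


instance : DecidableRel xorRel := fun u v => by unfold xorRel; infer_instance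

instance : DecidablePred xorInternal
  | Sum.inl i => inferInstanceAs (Decidable (i ≠ 0 ∧ i ≠ 5))
  | Sum.inr (Sum.inl i) => inferInstanceAs (Decidable (i ≠ 0 ∧ i ≠ 5))
  | Sum.inr (Sum.inr _) => inferInstanceAs (Decidable True)

namespace XorHelper

open SimpleGraph Walk

variable {V : Type*} {G : SimpleGraph V}

lemma support_tail_eq {v : V} {q : G.Walk v v} (hq : ¬ q.Nil) :
    q.support.tail = q.support.tail.dropLast ++ [v] := by
  have hne : q.support.tail ≠ [] := by
    cases q with
    | nil => simp at hq
    | cons h p => simp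
  conv_lhs => rw [← List.dropLast_append_getLast hne]
  congr 1
  rw [List.getLast_tail, q.getLast_support]

lemma dropLast_support_eq {v : V} {q : G.Walk v v} (hq : ¬ q.Nil) :
    q.support.dropLast = v :: q.support.tail.dropLast := by
  conv_lhs => rw [q.support_eq_cons, support_tail_eq hq, ← List.cons_append,
    List.dropLast_concat]

lemma dropLast_support_nodup {v : V} {q : G.Walk v v} (hq : q.IsCycle) :
    q.support.dropLast.Nodup := by
  have h1 := hq.support_nodup
  rw [support_tail_eq hq.not_nil, List.nodup_append] at h1
  rw [dropLast_support_eq hq.not_nil, List.nodup_cons]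
  exact ⟨fun hv => h1.2.2 v hv v (List.mem_singleton_self v) rfl, h1.1⟩

lemma firstDart_mem_darts {u w : V} (p : G.Walk u w) (hp : ¬ p.Nil) :
    p.firstDart hp ∈ p.darts := by
  cases p with
  | nil => simp at hp
  | cons h q =>
    have : (Walk.cons h q).firstDart hp = ⟨(u, _), h⟩ := by
      ext
      · rfl
      · show (Walk.cons h q).getVert 1 = _
        rw [Walk.getVert_cons_succ, Walk.getVert_zero]
    rw [this, Walk.darts_cons]
    exact List.mem_cons_self

lemma cycle_key {v : V} {q : G.Walk v v} (hq : q.IsCycle) :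
    ∃ w₁ w₂ : V, w₁ ≠ w₂ ∧ s(v, w₁) ∈ q.edges ∧ s(v, w₂) ∈ q.edges ∧
      ∀ w, s(v, w) ∈ q.edges → w = w₁ ∨ w = w₂ := by
  have hnil : ¬ q.Nil := hq.not_nil
  have hnil' : ¬ q.reverse.Nil := by
    rw [Walk.nil_iff_length_eq, Walk.length_reverse]
    exact fun h => hnil (Walk.nil_iff_length_eq.mpr h)
  set D₁ := q.firstDart hnil with hD₁
  set D₂ := q.reverse.firstDart hnil' with hD₂
  have hD₁m : D₁ ∈ q.darts := firstDart_mem_darts q hnil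
  have hD₂m : D₂.symm ∈ q.darts := by
    rw [← Walk.mem_darts_reverse]
    simpa using firstDart_mem_darts q.reverse hnil'
  have hedges : q.edges = q.darts.map (·.edge) := rfl
  have he1 : s(v, q.getVert 1) ∈ q.edges := by
    rw [hedges]
    exact List.mem_map_of_mem hD₁m
  have he2 : s(v, q.reverse.getVert 1) ∈ q.edges := by
    rw [hedges]
    have := List.mem_map_of_mem (f := fun d : G.Dart => d.edge) hD₂m
    rw [← show D₂.symm.edge = s(v, q.reverse.getVert 1) by rw [Dart.edge_symm]; rfl]; exact this
  have hne : (q.darts.map (·.edge)).Nodup := hedges ▸ hq.isTrail.edges_nodup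
  have hinj := List.inj_on_of_nodup_map hne
  have hnf : (q.darts.map (·.fst)).Nodup := by
    rw [q.map_fst_darts]; exact dropLast_support_nodup hq
  have hfstinj := List.inj_on_of_nodup_map hnf
  have hns : (q.darts.map (·.snd)).Nodup := by
    rw [q.map_snd_darts]; exact hq.support_nodup
  have hsndinj := List.inj_on_of_nodup_map hns
  refine ⟨q.getVert 1, q.reverse.getVert 1, ?_, he1, he2, ?_⟩
  · intro h
    have heq : D₁ = D₂.symm := by
      apply hinj hD₁m hD₂m
      show D₁.edge = D₂.symm.edge
      rw [Dart.edge_symm]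
      show s(v, q.getVert 1) = s(v, q.reverse.getVert 1)
      rw [h]
    have hv2 : v = q.reverse.getVert 1 := congrArg (fun d : G.Dart => d.fst) heq
    have hadj2 : G.Adj v (q.reverse.getVert 1) := (q.reverse.firstDart hnil').adj
    rw [← hv2] at hadj2
    exact G.irrefl hadj2
  · intro w hw
    rw [hedges] at hw
    obtain ⟨d, hd, hde⟩ := List.mem_map.mp hw
    have hde' : s(d.fst, d.snd) = s(v, w) := hde
    rw [Sym2.eq_iff] at hde'
    rcases hde' with ⟨h1, h2⟩ | ⟨h1, h2⟩
    · left
      have : d = D₁ := hfstinj hd hD₁m (by rw [h1]; rfl)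
      rw [← h2, this]
      rfl
    · right
      have : d = D₂.symm := hsndinj hd hD₂m (by rw [h2]; rfl)
      rw [← h1, this]
      rfl


section Ham
variable [DecidableEq V] {v₀ : V} {c : G.Walk v₀ v₀}

lemma ham_key (hc : c.IsHamiltonianCycle) (v : V) :
    ∃ w₁ w₂ : V, w₁ ≠ w₂ ∧ s(v, w₁) ∈ c.edges ∧ s(v, w₂) ∈ c.edges ∧
      ∀ w, s(v, w) ∈ c.edges → w = w₁ ∨ w = w₂ := by
  have hv : v ∈ c.support := hc.mem_support v
  obtain ⟨w₁, w₂, h12, h1, h2, hall⟩ := cycle_key (hc.isCycle.rotate hv)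
  have hmem : ∀ e : Sym2 V, e ∈ (c.rotate v hv).edges ↔ e ∈ c.edges :=
    fun e => (c.rotate_edges v hv).mem_iff
  exact ⟨w₁, w₂, h12, (hmem _).mp h1, (hmem _).mp h2,
    fun w hw => hall w ((hmem _).mpr hw)⟩

lemma uniq (hc : c.IsHamiltonianCycle) {v a b : V} (ha : s(v, a) ∈ c.edges)
    (hb : s(v, b) ∈ c.edges) (hab : a ≠ b) {w : V} (hw : s(v, w) ∈ c.edges) :
    w = a ∨ w = b := by
  obtain ⟨w₁, w₂, h12, _, _, hall⟩ := ham_key hc v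
  rcases hall a ha with rfl | rfl <;> rcases hall b hb with rfl | rfl <;>
    rcases hall w hw with rfl | rfl <;> tauto

lemma forced2 (hc : c.IsHamiltonianCycle) {v a b : V} (hab : a ≠ b)
    (hcl : ∀ w, G.Adj v w → w = a ∨ w = b) :
    s(v, a) ∈ c.edges ∧ s(v, b) ∈ c.edges := by
  obtain ⟨w₁, w₂, h12, h1, h2, _⟩ := ham_key hc v
  have c1 := hcl w₁ (c.adj_of_mem_edges h1)
  have c2 := hcl w₂ (c.adj_of_mem_edges h2)
  rcases c1 with rfl | rfl <;> rcases c2 with rfl | rfl <;>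
    first
    | exact absurd rfl h12
    | exact ⟨h1, h2⟩
    | exact ⟨h2, h1⟩

lemma forced3 (hc : c.IsHamiltonianCycle) {v a b d : V} (hab : a ≠ b) (had : a ≠ d)
    (hbd : b ≠ d) (hcl : ∀ w, G.Adj v w → w = a ∨ w = b ∨ w = d)
    (hna : s(v, a) ∉ c.edges) :
    s(v, b) ∈ c.edges ∧ s(v, d) ∈ c.edges := by
  obtain ⟨w₁, w₂, h12, h1, h2, _⟩ := ham_key hc v
  have c1 := hcl w₁ (c.adj_of_mem_edges h1)
  have c2 := hcl w₂ (c.adj_of_mem_edges h2)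
  rcases c1 with rfl | rfl | rfl <;> rcases c2 with rfl | rfl | rfl <;>
    first
    | exact absurd h1 hna
    | exact absurd h2 hna
    | exact absurd rfl h12
    | exact ⟨h1, h2⟩
    | exact ⟨h2, h1⟩

omit [DecidableEq V] in
lemma closed_walk {S : Set V} (hS : ∀ ⦃u w : V⦄, u ∈ S → s(u, w) ∈ c.edges → w ∈ S) :
    ∀ {u w : V} (p : G.Walk u w), (∀ e ∈ p.edges, e ∈ c.edges) → u ∈ S → w ∈ S := by
  intro u w p
  induction p with
  | nil => exact fun _ h => h
  | cons h p ih =>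
    intro hp hu
    exact ih (fun e he => hp e (by simp [he])) (hS hu (hp _ (by simp)))

lemma not_closed (hc : c.IsHamiltonianCycle) {S : Set V}
    (hS : ∀ ⦃u w : V⦄, u ∈ S → s(u, w) ∈ c.edges → w ∈ S)
    {x y : V} (hx : x ∈ S) (hy : y ∉ S) : False := by
  have hxs : x ∈ c.support := hc.mem_support x
  have hyq : y ∈ (c.rotate x hxs).support := by
    have h1 : y ∈ c.support.tail := by
      have := hc.isHamiltonian_tail.mem_support y
      rwa [Walk.support_tail_of_not_nil c hc.isCycle.not_nil] at this
    exact List.mem_of_mem_tail ((Walk.support_rotate c x hxs).mem_iff.mpr h1)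
  refine hy (closed_walk hS ((c.rotate x hxs).takeUntil y hyq) (fun e he => ?_) hx)
  exact (c.rotate_edges x hxs).mem_iff.mp (Walk.edges_takeUntil_subset _ hyq he)

end Ham
end XorHelper

/-- If a graph `G` contains the XOR-gadget (embedded via `f`, with adjacency inside the
image exactly the gadget's adjacency and internal vertices having no neighbors outside
the image), then every Hamilton cycle of `G` uses exactly one of the two edges
`{a, x_2}` and `{a', z_2}`, i.e. exactly one of the two connected edges `e, e'`. -/
theorem xor_gadget_exactly_one
    {V : Type*} [DecidableEq V] (G : SimpleGraph V)
    (f : XorVtx → V) (hf : Function.Injective f)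
    (hadj : ∀ u v : XorVtx, G.Adj (f u) (f v) ↔ (xorRel u v ∨ xorRel v u))
    (hclosed : ∀ u : XorVtx, xorInternal u → ∀ w : V, G.Adj (f u) w →
      ∃ u' : XorVtx, w = f u')
    (v₀ : V) (c : G.Walk v₀ v₀) (hc : c.IsHamiltonianCycle) :
    Xor' (s(f (Sum.inl 0), f (Sum.inl 1)) ∈ c.edges)
      (s(f (Sum.inr (Sum.inl 0)), f (Sum.inr (Sum.inl 1))) ∈ c.edges) := by
  have fne : ∀ {u v : XorVtx}, u ≠ v → f u ≠ f v := fun h he => h (hf he)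
  have swmem : ∀ {a b : V}, s(a, b) ∈ c.edges → s(b, a) ∈ c.edges := fun h => by
    rwa [Sym2.eq_swap]
  have class3 : ∀ g u1 u2 u3 : XorVtx, xorInternal g →
      (∀ u : XorVtx, (xorRel g u ∨ xorRel u g) → u = u1 ∨ u = u2 ∨ u = u3) →
      ∀ w, G.Adj (f g) w → w = f u1 ∨ w = f u2 ∨ w = f u3 := by
    intro g u1 u2 u3 hint hcl w hw
    obtain ⟨u, rfl⟩ := hclosed g hint w hw
    rcases hcl u ((hadj g u).mp hw) with rfl | rfl | rfl <;> tauto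
  have class2 : ∀ g u1 u2 : XorVtx, xorInternal g →
      (∀ u : XorVtx, (xorRel g u ∨ xorRel u g) → u = u1 ∨ u = u2) →
      ∀ w, G.Adj (f g) w → w = f u1 ∨ w = f u2 := by
    intro g u1 u2 hint hcl w hw
    obtain ⟨u, rfl⟩ := hclosed g hint w hw
    rcases hcl u ((hadj g u).mp hw) with rfl | rfl <;> tauto
  have hy0 := XorHelper.forced2 hc (fne (by decide))
    (class2 (Sum.inr (Sum.inr 0)) (Sum.inl 1) (Sum.inr (Sum.inl 1)) (by decide) (by decide))
  have hy1 := XorHelper.forced2 hc (fne (by decide))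
    (class2 (Sum.inr (Sum.inr 1)) (Sum.inl 2) (Sum.inr (Sum.inl 2)) (by decide) (by decide))
  have hy2 := XorHelper.forced2 hc (fne (by decide))
    (class2 (Sum.inr (Sum.inr 2)) (Sum.inl 3) (Sum.inr (Sum.inl 3)) (by decide) (by decide))
  by_cases ht : s(f (Sum.inl 0), f (Sum.inl 1)) ∈ c.edges <;>
    by_cases hb : s(f (Sum.inr (Sum.inl 0)), f (Sum.inr (Sum.inl 1))) ∈ c.edges
  · exfalso
    have ht1 : s(f (Sum.inl 1), f (Sum.inl 2)) ∉ c.edges := by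
      intro hE
      rcases XorHelper.uniq hc (swmem hy0.1) (swmem ht) (fne (by decide)) hE with h | h
      · exact fne (by decide) h
      · exact fne (by decide) h
    have hb1 : s(f (Sum.inr (Sum.inl 1)), f (Sum.inr (Sum.inl 2))) ∉ c.edges := by
      intro hE
      rcases XorHelper.uniq hc (swmem hy0.2) (swmem hb) (fne (by decide)) hE with h | h
      · exact fne (by decide) h
      · exact fne (by decide) h
    have hx2 := XorHelper.forced3 hc (fne (by decide)) (fne (by decide)) (fne (by decide))
      (class3 (Sum.inl 2) (Sum.inl 1) (Sum.inl 3) (Sum.inr (Sum.inr 1)) (by decide) (by decide))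
      (fun hE => ht1 (swmem hE))
    have hz2 := XorHelper.forced3 hc (fne (by decide)) (fne (by decide)) (fne (by decide))
      (class3 (Sum.inr (Sum.inl 2)) (Sum.inr (Sum.inl 1)) (Sum.inr (Sum.inl 3))
        (Sum.inr (Sum.inr 1)) (by decide) (by decide))
      (fun hE => hb1 (swmem hE))
    refine XorHelper.not_closed hc (S := {f (Sum.inl 2), f (Sum.inl 3),
      f (Sum.inr (Sum.inr 1)), f (Sum.inr (Sum.inr 2)),
      f (Sum.inr (Sum.inl 2)), f (Sum.inr (Sum.inl 3))}) (y := f (Sum.inl 0)) ?_ (Set.mem_insert _ _) ?_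
    · intro u w hu hw
      simp only [Set.mem_insert_iff, Set.mem_singleton_iff] at hu ⊢
      rcases hu with rfl | rfl | rfl | rfl | rfl | rfl
      · rcases XorHelper.uniq hc hx2.1 hx2.2 (fne (by decide)) hw with rfl | rfl <;> tauto
      · rcases XorHelper.uniq hc (swmem hx2.1) (swmem hy2.1) (fne (by decide)) hw with
          rfl | rfl <;> tauto
      · rcases XorHelper.uniq hc hy1.1 hy1.2 (fne (by decide)) hw with rfl | rfl <;> tauto
      · rcases XorHelper.uniq hc hy2.1 hy2.2 (fne (by decide)) hw with rfl | rfl <;> tauto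
      · rcases XorHelper.uniq hc (swmem hy1.2) hz2.1 (fne (by decide)) hw with rfl | rfl <;> tauto
      · rcases XorHelper.uniq hc (swmem hz2.1) (swmem hy2.2) (fne (by decide)) hw with
          rfl | rfl <;> tauto
    · simp only [Set.mem_insert_iff, Set.mem_singleton_iff]
      push_neg
      exact ⟨fne (by decide), fne (by decide), fne (by decide), fne (by decide),
        fne (by decide), fne (by decide)⟩
  · exact Or.inl ⟨ht, hb⟩
  · exact Or.inr ⟨hb, ht⟩
  · exfalso
    have hx1 := XorHelper.forced3 hc (fne (by decide)) (fne (by decide)) (fne (by decide))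
      (class3 (Sum.inl 1) (Sum.inl 0) (Sum.inl 2) (Sum.inr (Sum.inr 0)) (by decide) (by decide))
      (fun hE => ht (swmem hE))
    have hz1 := XorHelper.forced3 hc (fne (by decide)) (fne (by decide)) (fne (by decide))
      (class3 (Sum.inr (Sum.inl 1)) (Sum.inr (Sum.inl 0)) (Sum.inr (Sum.inl 2))
        (Sum.inr (Sum.inr 0)) (by decide) (by decide))
      (fun hE => hb (swmem hE))
    refine XorHelper.not_closed hc (S := {f (Sum.inl 1), f (Sum.inl 2),
      f (Sum.inr (Sum.inr 0)), f (Sum.inr (Sum.inr 1)),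
      f (Sum.inr (Sum.inl 1)), f (Sum.inr (Sum.inl 2))}) (y := f (Sum.inl 0)) ?_ (Set.mem_insert _ _) ?_
    · intro u w hu hw
      simp only [Set.mem_insert_iff, Set.mem_singleton_iff] at hu ⊢
      rcases hu with rfl | rfl | rfl | rfl | rfl | rfl
      · rcases XorHelper.uniq hc hx1.1 hx1.2 (fne (by decide)) hw with rfl | rfl <;> tauto
      · rcases XorHelper.uniq hc (swmem hx1.1) (swmem hy1.1) (fne (by decide)) hw with
          rfl | rfl <;> tauto
      · rcases XorHelper.uniq hc hy0.1 hy0.2 (fne (by decide)) hw with rfl | rfl <;> tauto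
      · rcases XorHelper.uniq hc hy1.1 hy1.2 (fne (by decide)) hw with rfl | rfl <;> tauto
      · rcases XorHelper.uniq hc hz1.1 hz1.2 (fne (by decide)) hw with rfl | rfl <;> tauto
      · rcases XorHelper.uniq hc (swmem hz1.1) (swmem hy1.2) (fne (by decide)) hw with
          rfl | rfl <;> tauto
    · simp only [Set.mem_insert_iff, Set.mem_singleton_iff]
      push_neg
      exact ⟨fne (by decide), fne (by decide), fne (by decide), fne (by decide),
        fne (by decide), fne (by decide)⟩
end

section
/- Every vertex cover of the graph G(φ) from the 3SAT reduction (3n variables, ℓ clauses with clause triangles) contains at least 2 vertices from each clause triangle and at least one endpoint of each variable-gadget edge, hence has cardinality at least 2ℓ + 3n; and a set achieving exactly this bound exists if and only if φ is satisfiable. -/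
open Finset

/-! Vertex cover bound for the 3SAT reduction graph on `3n` variables and `ℓ` clauses. -/

abbrev VCVtx (n ℓ : ℕ) := (Fin (3 * n) × Bool) ⊕ (Fin ℓ × Fin 3)

def satGraphVC (n ℓ : ℕ) (φ : Fin ℓ → Fin 3 → Fin (3 * n) × Bool) :
    SimpleGraph (VCVtx n ℓ) :=
  SimpleGraph.fromRel (fun u v =>
    (∃ (i : Fin (3 * n)) (b : Bool), u = Sum.inl (i, b) ∧ v = Sum.inl (i, !b)) ∨
    (∃ (c : Fin ℓ) (j j' : Fin 3), j ≠ j' ∧ u = Sum.inr (c, j) ∧ v = Sum.inr (c, j')) ∨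
    (∃ (c : Fin ℓ) (j : Fin 3), u = Sum.inr (c, j) ∧
      v = Sum.inl ((φ c j).1, !(φ c j).2)))

def IsVertexCover {V : Type*} (G : SimpleGraph V) (S : Set V) : Prop :=
  ∀ u v : V, G.Adj u v → u ∈ S ∨ v ∈ S

section Helpers

variable {n ℓ : ℕ} {φ : Fin ℓ → Fin 3 → Fin (3 * n) × Bool}

lemma vc_adj_var (i : Fin (3 * n)) (b : Bool) :
    (satGraphVC n ℓ φ).Adj (Sum.inl (i, b)) (Sum.inl (i, !b)) := by
  rw [satGraphVC, SimpleGraph.fromRel_adj]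
  refine ⟨by simp, Or.inl (Or.inl ⟨i, b, rfl, rfl⟩)⟩

lemma vc_adj_tri (c : Fin ℓ) {j j' : Fin 3} (h : j ≠ j') :
    (satGraphVC n ℓ φ).Adj (Sum.inr (c, j)) (Sum.inr (c, j')) := by
  rw [satGraphVC, SimpleGraph.fromRel_adj]
  exact ⟨by simp [h], Or.inl (Or.inr (Or.inl ⟨c, j, j', h, rfl, rfl⟩))⟩

lemma vc_adj_match (c : Fin ℓ) (j : Fin 3) :
    (satGraphVC n ℓ φ).Adj (Sum.inr (c, j)) (Sum.inl ((φ c j).1, !(φ c j).2)) := by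
  rw [satGraphVC, SimpleGraph.fromRel_adj]
  exact ⟨by simp, Or.inl (Or.inr (Or.inr ⟨c, j, rfl, rfl⟩))⟩

lemma vc_tri {S : Finset (VCVtx n ℓ)}
    (hS : IsVertexCover (satGraphVC n ℓ φ) (S : Set (VCVtx n ℓ))) (c : Fin ℓ) :
    2 ≤ (S.filter (fun v => ∃ j : Fin 3, v = Sum.inr (c, j))).card := by
  by_contra hlt
  push_neg at hlt
  have key : ∀ j j' : Fin 3, j ≠ j' →
      (Sum.inr (c, j) : VCVtx n ℓ) ∈ S → (Sum.inr (c, j') : VCVtx n ℓ) ∈ S → False := by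
    intro j j' hne h1 h2
    have : 1 < (S.filter (fun v => ∃ j : Fin 3, v = Sum.inr (c, j))).card :=
      Finset.one_lt_card.mpr ⟨_, Finset.mem_filter.mpr ⟨h1, ⟨j, rfl⟩⟩,
        _, Finset.mem_filter.mpr ⟨h2, ⟨j', rfl⟩⟩, by simp [hne]⟩
    omega
  have h01 := hS _ _ (vc_adj_tri (φ := φ) c (show (0 : Fin 3) ≠ 1 by decide))
  have h02 := hS _ _ (vc_adj_tri (φ := φ) c (show (0 : Fin 3) ≠ 2 by decide))
  have h12 := hS _ _ (vc_adj_tri (φ := φ) c (show (1 : Fin 3) ≠ 2 by decide))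
  simp only [Finset.mem_coe] at h01 h02 h12
  rcases h01 with h0 | h1
  · rcases h12 with h1 | h2
    · exact key 0 1 (by decide) h0 h1
    · exact key 0 2 (by decide) h0 h2
  · rcases h02 with h0 | h2
    · exact key 0 1 (by decide) h0 h1
    · exact key 1 2 (by decide) h1 h2

lemma vc_var {S : Finset (VCVtx n ℓ)}
    (hS : IsVertexCover (satGraphVC n ℓ φ) (S : Set (VCVtx n ℓ))) (i : Fin (3 * n)) :
    (Sum.inl (i, true) : VCVtx n ℓ) ∈ S ∨ (Sum.inl (i, false) : VCVtx n ℓ) ∈ S := by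
  have := hS _ _ (vc_adj_var (φ := φ) i true)
  simpa using this

lemma vc_inl_card {S : Finset (VCVtx n ℓ)}
    (hS : IsVertexCover (satGraphVC n ℓ φ) (S : Set (VCVtx n ℓ))) :
    3 * n ≤ (S.filter (fun v => v.isLeft = true)).card := by
  classical
  set f : Fin (3 * n) → VCVtx n ℓ := fun i =>
    if (Sum.inl (i, true) : VCVtx n ℓ) ∈ S then Sum.inl (i, true) else Sum.inl (i, false) with hf
  have hfi : ∀ i, ∃ b : Bool, f i = Sum.inl (i, b) := by
    intro i; by_cases h : (Sum.inl (i, true) : VCVtx n ℓ) ∈ S <;> simp [hf, h]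
  have hmem : ∀ i, f i ∈ S.filter (fun v => v.isLeft = true) := by
    intro i
    rcases vc_var hS i with h | h
    · simp [hf, h]
    · by_cases h' : (Sum.inl (i, true) : VCVtx n ℓ) ∈ S <;> simp [hf, h', h]
  have hinj : Set.InjOn f ↑(Finset.univ : Finset (Fin (3 * n))) := by
    intro i _ i' _ h
    obtain ⟨b, hb⟩ := hfi i
    obtain ⟨b', hb'⟩ := hfi i'
    rw [hb, hb'] at h
    have := Sum.inl.inj h
    exact (Prod.ext_iff.mp this).1
  calc 3 * n = (Finset.univ : Finset (Fin (3 * n))).card := by simp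
    _ ≤ _ := Finset.card_le_card_of_injOn f (fun i _ => hmem i) hinj

end Helpers
section Helpers2

variable {n ℓ : ℕ} {φ : Fin ℓ → Fin 3 → Fin (3 * n) × Bool}

lemma vc_biunion_sub {S : Finset (VCVtx n ℓ)} :
    (Finset.univ.biUnion fun c : Fin ℓ =>
        S.filter (fun v => ∃ j : Fin 3, v = Sum.inr (c, j)))
      ⊆ S.filter (fun v => ¬ (v.isLeft = true)) := by
  intro v hv
  simp only [Finset.mem_biUnion, Finset.mem_filter] at hv ⊢
  obtain ⟨c, -, hvS, j, rfl⟩ := hv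
  exact ⟨hvS, by simp⟩

lemma vc_pairwise {S : Finset (VCVtx n ℓ)} :
    ∀ c ∈ (Finset.univ : Finset (Fin ℓ)), ∀ c' ∈ Finset.univ, c ≠ c' →
      Disjoint (S.filter (fun v : VCVtx n ℓ => ∃ j : Fin 3, v = Sum.inr (c, j)))
        (S.filter (fun v => ∃ j : Fin 3, v = Sum.inr (c', j))) := by
  intro c _ c' _ hcc
  rw [Finset.disjoint_left]
  rintro v hv hv'
  simp only [Finset.mem_filter] at hv hv'
  obtain ⟨-, j, rfl⟩ := hv
  obtain ⟨-, j', h⟩ := hv'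
  exact hcc (congrArg Prod.fst (Sum.inr.inj h))

lemma vc_inr_card {S : Finset (VCVtx n ℓ)}
    (hS : IsVertexCover (satGraphVC n ℓ φ) (S : Set (VCVtx n ℓ))) :
    2 * ℓ ≤ (S.filter (fun v => ¬ (v.isLeft = true))).card := by
  have h1 : 2 * ℓ ≤ ∑ c : Fin ℓ,
      (S.filter (fun v => ∃ j : Fin 3, v = Sum.inr (c, j))).card := by
    calc 2 * ℓ = ∑ _c : Fin ℓ, 2 := by simp [Finset.sum_const, Nat.mul_comm]
      _ ≤ _ := Finset.sum_le_sum (fun c _ => vc_tri hS c)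
  calc 2 * ℓ ≤ _ := h1
    _ = (Finset.univ.biUnion fun c : Fin ℓ =>
          S.filter (fun v => ∃ j : Fin 3, v = Sum.inr (c, j))).card :=
        (Finset.card_biUnion vc_pairwise).symm
    _ ≤ _ := Finset.card_le_card vc_biunion_sub

lemma vc_inl_card_strict {S : Finset (VCVtx n ℓ)}
    (hS : IsVertexCover (satGraphVC n ℓ φ) (S : Set (VCVtx n ℓ))) (i₀ : Fin (3 * n))
    (h1 : (Sum.inl (i₀, true) : VCVtx n ℓ) ∈ S)
    (h2 : (Sum.inl (i₀, false) : VCVtx n ℓ) ∈ S) :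
    3 * n + 1 ≤ (S.filter (fun v => v.isLeft = true)).card := by
  classical
  set f : Fin (3 * n) → VCVtx n ℓ := fun i =>
    if (Sum.inl (i, true) : VCVtx n ℓ) ∈ S then Sum.inl (i, true) else Sum.inl (i, false) with hf
  have hfi : ∀ i, ∃ b : Bool, f i = Sum.inl (i, b) := by
    intro i; by_cases h : (Sum.inl (i, true) : VCVtx n ℓ) ∈ S <;> simp [hf, h]
  have hmem : ∀ i, f i ∈ S.filter (fun v => v.isLeft = true) := by
    intro i
    rcases vc_var hS i with h | h
    · simp [hf, h]
    · by_cases h' : (Sum.inl (i, true) : VCVtx n ℓ) ∈ S <;> simp [hf, h', h]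
  have hinj : Function.Injective f := by
    intro i i' h
    obtain ⟨b, hb⟩ := hfi i
    obtain ⟨b', hb'⟩ := hfi i'
    rw [hb, hb'] at h
    exact (Prod.ext_iff.mp (Sum.inl.inj h)).1
  have hnotmem : (Sum.inl (i₀, false) : VCVtx n ℓ) ∉ Finset.univ.image f := by
    simp only [Finset.mem_image, not_exists]
    rintro i ⟨-, hi⟩
    obtain ⟨b, hb⟩ := hfi i
    rw [hb] at hi
    obtain ⟨hi1, hi2⟩ := Prod.ext_iff.mp (Sum.inl.inj hi)
    subst hi1
    have : f i = Sum.inl (i, true) := by simp [hf, h1]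
    rw [this] at hb
    have := (Prod.ext_iff.mp (Sum.inl.inj hb)).2
    simp_all
  have hsub : insert (Sum.inl (i₀, false) : VCVtx n ℓ) (Finset.univ.image f)
      ⊆ S.filter (fun v => v.isLeft = true) := by
    intro v hv
    rcases Finset.mem_insert.mp hv with rfl | hv
    · simp [h2]
    · obtain ⟨i, -, rfl⟩ := Finset.mem_image.mp hv
      exact hmem i
  calc 3 * n + 1 = (insert (Sum.inl (i₀, false) : VCVtx n ℓ) (Finset.univ.image f)).card := by
        rw [Finset.card_insert_of_notMem hnotmem, Finset.card_image_of_injective _ hinj]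
        simp
    _ ≤ _ := Finset.card_le_card hsub

lemma vc_inr_card_strict {S : Finset (VCVtx n ℓ)}
    (hS : IsVertexCover (satGraphVC n ℓ φ) (S : Set (VCVtx n ℓ))) (c₀ : Fin ℓ)
    (h : ∀ j : Fin 3, (Sum.inr (c₀, j) : VCVtx n ℓ) ∈ S) :
    2 * ℓ + 1 ≤ (S.filter (fun v => ¬ (v.isLeft = true))).card := by
  have h3 : 2 < (S.filter (fun v => ∃ j : Fin 3, v = Sum.inr (c₀, j))).card := by
    have hsub : ({Sum.inr (c₀, 0), Sum.inr (c₀, 1), Sum.inr (c₀, 2)} : Finset (VCVtx n ℓ))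
        ⊆ S.filter (fun v => ∃ j : Fin 3, v = Sum.inr (c₀, j)) := by
      intro v hv
      simp only [Finset.mem_insert, Finset.mem_singleton] at hv
      rcases hv with rfl | rfl | rfl
      · exact Finset.mem_filter.mpr ⟨h 0, 0, rfl⟩
      · exact Finset.mem_filter.mpr ⟨h 1, 1, rfl⟩
      · exact Finset.mem_filter.mpr ⟨h 2, 2, rfl⟩
    have hcard : ({Sum.inr (c₀, 0), Sum.inr (c₀, 1), Sum.inr (c₀, 2)} : Finset (VCVtx n ℓ)).card = 3 := by
      rw [Finset.card_insert_of_notMem (by simp), Finset.card_insert_of_notMem (by simp)]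
      simp
    calc (2:ℕ) < 3 := by norm_num
      _ = _ := hcard.symm
      _ ≤ _ := Finset.card_le_card hsub
  have h1 : 2 * ℓ < ∑ c : Fin ℓ,
      (S.filter (fun v => ∃ j : Fin 3, v = Sum.inr (c, j))).card := by
    have : (∑ _c : Fin ℓ, 2) < ∑ c : Fin ℓ,
        (S.filter (fun v => ∃ j : Fin 3, v = Sum.inr (c, j))).card :=
      Finset.sum_lt_sum (fun c _ => vc_tri hS c) ⟨c₀, Finset.mem_univ _, h3⟩
    calc 2 * ℓ = ∑ _c : Fin ℓ, 2 := by simp [Finset.sum_const, Nat.mul_comm]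
      _ < _ := this
  have h2 : (∑ c : Fin ℓ,
      (S.filter (fun v => ∃ j : Fin 3, v = Sum.inr (c, j))).card)
      ≤ (S.filter (fun v => ¬ (v.isLeft = true))).card := by
    rw [← Finset.card_biUnion vc_pairwise]
    exact Finset.card_le_card vc_biunion_sub
  omega

end Helpers2

/-- Every vertex cover of `G(φ)` contains at least two vertices of each clause
triangle and an endpoint of each variable-gadget edge, hence has at least
`2ℓ + 3n` vertices; a vertex cover of exactly `2ℓ + 3n` vertices exists iff `φ`
is satisfiable. -/
theorem vertex_cover_bound (n ℓ : ℕ) (φ : Fin ℓ → Fin 3 → Fin (3 * n) × Bool) :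
    (∀ S : Finset (VCVtx n ℓ),
      IsVertexCover (satGraphVC n ℓ φ) (S : Set (VCVtx n ℓ)) →
        (∀ c : Fin ℓ,
          2 ≤ (S.filter (fun v => ∃ j : Fin 3, v = Sum.inr (c, j))).card) ∧
        (∀ i : Fin (3 * n), (Sum.inl (i, true) : VCVtx n ℓ) ∈ S ∨ Sum.inl (i, false) ∈ S) ∧
        2 * ℓ + 3 * n ≤ S.card)
    ∧ ((∃ S : Finset (VCVtx n ℓ),
          IsVertexCover (satGraphVC n ℓ φ) (S : Set (VCVtx n ℓ)) ∧
            S.card = 2 * ℓ + 3 * n)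
        ↔ ∃ a : Fin (3 * n) → Bool, ∀ c : Fin ℓ, ∃ j : Fin 3,
            a (φ c j).1 = (φ c j).2) := by
  constructor
  · intro S hS
    refine ⟨vc_tri hS, vc_var hS, ?_⟩
    have hA := vc_inl_card hS
    have hB := vc_inr_card hS
    have htot := Finset.card_filter_add_card_filter_not
      (s := S) (p := fun v => v.isLeft = true)
    omega
  constructor
  · rintro ⟨S, hS, hcard⟩
    have hA := vc_inl_card hS
    have hB := vc_inr_card hS
    have htot := Finset.card_filter_add_card_filter_not
      (s := S) (p := fun v => v.isLeft = true)
    have hone : ∀ i : Fin (3 * n),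
        ¬((Sum.inl (i, true) : VCVtx n ℓ) ∈ S ∧ (Sum.inl (i, false) : VCVtx n ℓ) ∈ S) := by
      rintro i ⟨h1, h2⟩
      have := vc_inl_card_strict hS i h1 h2
      omega
    have hmiss : ∀ c : Fin ℓ, ∃ j : Fin 3, (Sum.inr (c, j) : VCVtx n ℓ) ∉ S := by
      intro c
      by_contra hc
      push_neg at hc
      have := vc_inr_card_strict hS c hc
      omega
    refine ⟨fun i => decide ((Sum.inl (i, false) : VCVtx n ℓ) ∈ S), fun c => ?_⟩
    obtain ⟨j, hj⟩ := hmiss c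
    refine ⟨j, ?_⟩
    have hcov := hS _ _ (vc_adj_match (φ := φ) c j)
    simp only [Finset.mem_coe] at hcov
    rcases hcov with h | h
    · exact absurd h hj
    · cases hb : (φ c j).2
      · rw [hb] at h
        simp only [Bool.not_false] at h
        have h2 : (Sum.inl ((φ c j).1, false) : VCVtx n ℓ) ∉ S := fun h2 => hone _ ⟨h, h2⟩
        simp [h2]
      · rw [hb] at h
        simp only [Bool.not_true] at h
        simp [h]
  · rintro ⟨a, ha⟩
    classical
    choose jc hjc using ha
    set S1 : Finset (VCVtx n ℓ) :=
      Finset.univ.image (fun i : Fin (3 * n) => Sum.inl (i, !(a i))) with hS1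
    set S2 : Finset (VCVtx n ℓ) := Finset.univ.biUnion (fun c : Fin ℓ =>
      ({Sum.inr (c, jc c + 1), Sum.inr (c, jc c + 2)} : Finset (VCVtx n ℓ))) with hS2
    have hfin2 : ∀ x y : Fin 3, y ≠ x → y = x + 1 ∨ y = x + 2 := by decide
    have hmemS1 : ∀ i : Fin (3 * n), (Sum.inl (i, !(a i)) : VCVtx n ℓ) ∈ S1 := by
      intro i
      exact Finset.mem_image.mpr ⟨i, Finset.mem_univ _, rfl⟩
    have hmemS2 : ∀ (c : Fin ℓ) (j : Fin 3), j ≠ jc c → (Sum.inr (c, j) : VCVtx n ℓ) ∈ S2 := by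
      intro c j hne
      refine Finset.mem_biUnion.mpr ⟨c, Finset.mem_univ _, ?_⟩
      rcases hfin2 (jc c) j hne with rfl | rfl
      · exact Finset.mem_insert_self _ _
      · exact Finset.mem_insert.mpr (Or.inr (Finset.mem_singleton_self _))
    refine ⟨S1 ∪ S2, ?_, ?_⟩
    · have main : ∀ u v : VCVtx n ℓ,
          ((∃ (i : Fin (3 * n)) (b : Bool), u = Sum.inl (i, b) ∧ v = Sum.inl (i, !b)) ∨
           (∃ (c : Fin ℓ) (j j' : Fin 3), j ≠ j' ∧ u = Sum.inr (c, j) ∧ v = Sum.inr (c, j')) ∨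
           (∃ (c : Fin ℓ) (j : Fin 3), u = Sum.inr (c, j) ∧
             v = Sum.inl ((φ c j).1, !(φ c j).2))) →
          u ∈ S1 ∪ S2 ∨ v ∈ S1 ∪ S2 := by
        rintro u v (⟨i, b, rfl, rfl⟩ | ⟨c, j, j', hjj, rfl, rfl⟩ | ⟨c, j, rfl, rfl⟩)
        · by_cases hb : b = !(a i)
          · exact Or.inl (Finset.mem_union_left _ (hb ▸ hmemS1 i))
          · have hb' : (!b) = !(a i) := by
              revert hb; cases b <;> cases (a i) <;> simp
            exact Or.inr (Finset.mem_union_left _ (hb' ▸ hmemS1 i))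
        · by_cases hj0 : j = jc c
          · subst hj0
            exact Or.inr (Finset.mem_union_right _ (hmemS2 c j' (fun h => hjj h.symm)))
          · exact Or.inl (Finset.mem_union_right _ (hmemS2 c j hj0))
        · by_cases hj0 : j = jc c
          · subst hj0
            have := hjc c
            refine Or.inr (Finset.mem_union_left _ ?_)
            rw [← this]
            exact hmemS1 _
          · exact Or.inl (Finset.mem_union_right _ (hmemS2 c j hj0))
      intro u v huv
      rw [satGraphVC, SimpleGraph.fromRel_adj] at huv
      obtain ⟨-, h | h⟩ := huv
      · simpa only [Finset.mem_coe] using main u v h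
      · simpa only [Finset.mem_coe] using (main v u h).symm
    · have hd : Disjoint S1 S2 := by
        rw [Finset.disjoint_left]
        intro x hx hx'
        obtain ⟨i, -, rfl⟩ := Finset.mem_image.mp hx
        rw [hS2] at hx'
        simp only [Finset.mem_biUnion, Finset.mem_insert, Finset.mem_singleton] at hx'
        obtain ⟨c, -, h | h⟩ := hx' <;> exact absurd h (by simp)
      have hcard1 : S1.card = 3 * n := by
        rw [hS1, Finset.card_image_of_injective]
        · simp
        · intro i i' h
          exact (Prod.ext_iff.mp (Sum.inl.inj h)).1
      have hcard2 : S2.card = 2 * ℓ := by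
        rw [hS2, Finset.card_biUnion]
        · have hpair : ∀ c : Fin ℓ,
              ({Sum.inr (c, jc c + 1), Sum.inr (c, jc c + 2)} : Finset (VCVtx n ℓ)).card = 2 := by
            intro c
            rw [Finset.card_insert_of_notMem, Finset.card_singleton]
            simp only [Finset.mem_singleton]
            intro h
            have h2 := (Prod.ext_iff.mp (Sum.inr.inj h)).2
            have : ∀ x : Fin 3, x + 1 ≠ x + 2 := by decide
            exact this _ h2
          rw [Finset.sum_congr rfl (fun c _ => hpair c)]
          simp [Nat.mul_comm]
        · intro c _ c' _ hcc
          rw [Function.onFun, Finset.disjoint_left]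
          intro x hx hx'
          simp only [Finset.mem_insert, Finset.mem_singleton] at hx hx'
          apply hcc
          rcases hx with rfl | rfl <;> rcases hx' with h | h <;>
            exact congrArg Prod.fst (Sum.inr.inj h)
      rw [Finset.card_union_of_disjoint hd, hcard1, hcard2]
      omega
end
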